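/- arXiv:1806.10320 — 4 statements merged into one kernel-verified Lean document; each statement's English description precedes it below -/
import Mathlib

section
/- Let m ≥ 0 be an integer, let λ_0, …, λ_m > 0 be real weights, let 0 ≤ α_0 < α_1 < ⋯ < α_m ≤ 1, and let τ > 0. Define F(s) = Σ_{r=0}^{m} (λ_r/Γ(3−α_r)) · s^{1−α_r} · (s − (1 − α_r/2)) · τ^{2−α_r} for s ≥ 0. Then F has exactly one positive root σ*, and this root satisfies a ≤ σ* ≤ b, where a = min_{0≤r≤m} (1 − α_r/2) and b = max_{0≤r≤m} (1 − α_r/2). In particular, if α_0 = 0 and α_m = 1, then σ* ∈ [1/2, 1]. -/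
/-- The function `F` from Lemma 2.2: `F(s) = Σ_{r=0}^{m} (λ_r/Γ(3−α_r)) s^{1−α_r}
(s − (1 − α_r/2)) τ^{2−α_r}`, with real powers. -/
noncomputable def Ffun (m : ℕ) (lam alf : ℕ → ℝ) (τ : ℝ) (s : ℝ) : ℝ :=
  ∑ r ∈ Finset.range (m + 1),
    lam r / Real.Gamma (3 - alf r) * s ^ (1 - alf r) * (s - (1 - alf r / 2)) * τ ^ (2 - alf r)

/-- Lemma 2.2: `F` has exactly one positive root `σ*`, which lies between
`a = min_r (1 − α_r/2)` and `b = max_r (1 − α_r/2)`; in particular, if `α_0 = 0` and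
`α_m = 1`, then `σ* ∈ [1/2, 1]`. -/
theorem unique_positive_root_of_F (m : ℕ) (lam alf : ℕ → ℝ)
    (hlam : ∀ r ≤ m, 0 < lam r)
    (hmono : ∀ r, r < m → alf r < alf (r + 1))
    (h0 : 0 ≤ alf 0) (h1 : alf m ≤ 1)
    (τ : ℝ) (hτ : 0 < τ) :
    ∃ s : ℝ, (0 < s ∧ Ffun m lam alf τ s = 0) ∧
      (∀ t : ℝ, 0 < t → Ffun m lam alf τ t = 0 → t = s) ∧
      (Finset.range (m + 1)).inf' (by simp) (fun r => 1 - alf r / 2) ≤ s ∧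
      s ≤ (Finset.range (m + 1)).sup' (by simp) (fun r => 1 - alf r / 2) ∧
      (alf 0 = 0 → alf m = 1 → 1 / 2 ≤ s ∧ s ≤ 1) := by
  have hne : (Finset.range (m + 1)).Nonempty := by simp
  -- monotonicity chain
  have hle : ∀ j, j ≤ m → ∀ i, i ≤ j → alf i ≤ alf j := by
    intro j
    induction j with
    | zero => intro _ i hi; interval_cases i; exact le_rfl
    | succ n ih =>
      intro hj i hi
      rcases Nat.lt_succ_iff_lt_or_eq.mp (Nat.lt_succ_of_le hi) with h | h
      · have h1 : alf i ≤ alf n := ih (by omega) i (by omega)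
        have h2 : alf n < alf (n + 1) := hmono n (by omega)
        linarith
      · subst h; exact le_rfl
  have hα0 : ∀ r ≤ m, 0 ≤ alf r := fun r hr =>
    le_trans h0 (hle r hr 0 (Nat.zero_le _))
  have hα1 : ∀ r ≤ m, alf r ≤ 1 := fun r hr =>
    le_trans (hle m le_rfl r hr) h1
  have hΓ : ∀ r ≤ m, 0 < Real.Gamma (3 - alf r) := fun r hr =>
    Real.Gamma_pos_of_pos (by linarith [hα1 r hr])
  have hc : ∀ r ≤ m, 0 < lam r / Real.Gamma (3 - alf r) := fun r hr =>
    div_pos (hlam r hr) (hΓ r hr)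
  have hT : ∀ r : ℕ, 0 < τ ^ (2 - alf r) := fun r => Real.rpow_pos_of_pos hτ _
  set F := Ffun m lam alf τ with hFdef
  -- derivative
  have hderiv : ∀ x : ℝ, 0 < x → HasDerivAt F
      (∑ r ∈ Finset.range (m + 1),
        (lam r / Real.Gamma (3 - alf r) * ((1 - alf r) * x ^ (1 - alf r - 1)) * (x - (1 - alf r / 2))
          + lam r / Real.Gamma (3 - alf r) * x ^ (1 - alf r) * 1) * τ ^ (2 - alf r)) x := by
    intro x hx
    have : HasDerivAt (fun s : ℝ => ∑ r ∈ Finset.range (m + 1),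
        lam r / Real.Gamma (3 - alf r) * s ^ (1 - alf r) * (s - (1 - alf r / 2)) * τ ^ (2 - alf r))
        (∑ r ∈ Finset.range (m + 1),
        (lam r / Real.Gamma (3 - alf r) * ((1 - alf r) * x ^ (1 - alf r - 1)) * (x - (1 - alf r / 2))
          + lam r / Real.Gamma (3 - alf r) * x ^ (1 - alf r) * 1) * τ ^ (2 - alf r)) x := by
      refine HasDerivAt.fun_sum fun r _ => ?_
      exact (((Real.hasDerivAt_rpow_const (p := 1 - alf r) (Or.inl hx.ne')).const_mul
        (lam r / Real.Gamma (3 - alf r))).mul ((hasDerivAt_id x).sub_const _)).mul_const _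
    exact this
  have hderivpos : ∀ x : ℝ, 1 / 2 < x →
      0 < ∑ r ∈ Finset.range (m + 1),
        (lam r / Real.Gamma (3 - alf r) * ((1 - alf r) * x ^ (1 - alf r - 1)) * (x - (1 - alf r / 2))
          + lam r / Real.Gamma (3 - alf r) * x ^ (1 - alf r) * 1) * τ ^ (2 - alf r) := by
    intro x hx
    have hx0 : (0:ℝ) < x := by linarith
    refine Finset.sum_pos (fun r hr => ?_) hne
    rw [Finset.mem_range] at hr
    have hrm : r ≤ m := by omega
    refine mul_pos ?_ (hT r)
    have hrw : x ^ (1 - alf r) = x ^ (1 - alf r - 1) * x := by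
      rw [← Real.rpow_add_one hx0.ne' (1 - alf r - 1)]
      congr 1; ring
    rw [hrw]
    have he : 0 < x ^ (1 - alf r - 1) := Real.rpow_pos_of_pos hx0 _
    have hA0 := hα0 r hrm
    have hA1 := hα1 r hrm
    have key : 0 < (2 - alf r) * x - (1 - alf r) * (1 - alf r / 2) := by nlinarith
    nlinarith [mul_pos (mul_pos (hc r hrm) he) key]
  have hmonoF : StrictMonoOn F (Set.Ici (1 / 2 : ℝ)) := by
    apply strictMonoOn_of_deriv_pos (convex_Ici _)
    · intro x hx
      exact (hderiv x (by simp at hx; linarith)).continuousAt.continuousWithinAt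
    · intro x hx
      rw [interior_Ici] at hx
      rw [(hderiv x (by simp at hx; linarith [hx])).deriv]
      exact hderivpos x hx
  set a := (Finset.range (m + 1)).inf' hne (fun r => 1 - alf r / 2) with hadef
  set b := (Finset.range (m + 1)).sup' hne (fun r => 1 - alf r / 2) with hbdef
  have ha_half : (1:ℝ) / 2 ≤ a := by
    refine Finset.le_inf' _ _ fun r hr => ?_
    rw [Finset.mem_range] at hr
    have := hα1 r (by omega); linarith
  have hb_one : b ≤ 1 := by
    refine Finset.sup'_le _ _ fun r hr => ?_
    rw [Finset.mem_range] at hr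
    have := hα0 r (by omega); linarith
  have haμ : ∀ r ≤ m, a ≤ 1 - alf r / 2 := by
    intro r hr
    rw [hadef]
    exact Finset.inf'_le (fun r => 1 - alf r / 2) (Finset.mem_range.mpr (Nat.lt_succ_of_le hr))
  have hμb : ∀ r ≤ m, 1 - alf r / 2 ≤ b := by
    intro r hr
    rw [hbdef]
    exact Finset.le_sup' (fun r => 1 - alf r / 2) (Finset.mem_range.mpr (Nat.lt_succ_of_le hr))
  have hab : a ≤ b := le_trans (haμ 0 (Nat.zero_le m)) (hμb 0 (Nat.zero_le m))
  have ha0 : (0:ℝ) < a := by linarith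
  have hFneg : ∀ t : ℝ, 0 < t → t < a → F t < 0 := by
    intro t ht hta
    refine Finset.sum_neg (fun r hr => ?_) hne
    rw [Finset.mem_range] at hr
    have hrm : r ≤ m := by omega
    have h1 : 0 < lam r / Real.Gamma (3 - alf r) * t ^ (1 - alf r) :=
      mul_pos (hc r hrm) (Real.rpow_pos_of_pos ht _)
    have h2 : t - (1 - alf r / 2) < 0 := by have := haμ r hrm; linarith
    exact mul_neg_of_neg_of_pos (mul_neg_of_pos_of_neg h1 h2) (hT r)
  have hFpos : ∀ t : ℝ, b < t → 0 < F t := by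
    intro t htb
    have ht : 0 < t := by linarith
    refine Finset.sum_pos (fun r hr => ?_) hne
    rw [Finset.mem_range] at hr
    have hrm : r ≤ m := by omega
    have h1 : 0 < lam r / Real.Gamma (3 - alf r) * t ^ (1 - alf r) :=
      mul_pos (hc r hrm) (Real.rpow_pos_of_pos ht _)
    have h2 : 0 < t - (1 - alf r / 2) := by have := hμb r hrm; linarith
    exact mul_pos (mul_pos h1 h2) (hT r)
  have hFa : F a ≤ 0 := by
    refine Finset.sum_nonpos fun r hr => ?_
    rw [Finset.mem_range] at hr
    have hrm : r ≤ m := by omega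
    have h1 : 0 < lam r / Real.Gamma (3 - alf r) * a ^ (1 - alf r) :=
      mul_pos (hc r hrm) (Real.rpow_pos_of_pos ha0 _)
    have h2 : a - (1 - alf r / 2) ≤ 0 := by have := haμ r hrm; linarith
    exact mul_nonpos_of_nonpos_of_nonneg (mul_nonpos_of_nonneg_of_nonpos h1.le h2) (hT r).le
  have hFb : 0 ≤ F b := by
    refine Finset.sum_nonneg fun r hr => ?_
    rw [Finset.mem_range] at hr
    have hrm : r ≤ m := by omega
    have h1 : 0 < lam r / Real.Gamma (3 - alf r) * b ^ (1 - alf r) :=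
      mul_pos (hc r hrm) (Real.rpow_pos_of_pos (by linarith) _)
    have h2 : 0 ≤ b - (1 - alf r / 2) := by have := hμb r hrm; linarith
    exact mul_nonneg (mul_nonneg h1.le h2) (hT r).le
  have hcont : ContinuousOn F (Set.Icc a b) := fun x hx =>
    (hderiv x (by have := hx.1; linarith)).continuousAt.continuousWithinAt
  obtain ⟨s, hs_mem, hFs⟩ := intermediate_value_Icc hab hcont ⟨hFa, hFb⟩
  have hsa : a ≤ s := hs_mem.1
  have hsb : s ≤ b := hs_mem.2
  have hs0 : 0 < s := by linarith
  refine ⟨s, ⟨hs0, hFs⟩, ?_, hsa, hsb, fun _ _ => ⟨by linarith, by linarith⟩⟩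
  intro t ht hFt
  have hta : ¬ t < a := fun h => absurd hFt (by have := hFneg t ht h; simp [hFdef] at this ⊢; linarith)
  have htb : ¬ b < t := fun h => absurd hFt (by have := hFpos t h; simp [hFdef] at this ⊢; linarith)
  push_neg at hta htb
  exact hmonoF.injOn (Set.mem_Ici.mpr (by linarith)) (Set.mem_Ici.mpr (by linarith))
    (hFt.trans hFs.symm)
end

section
/- Assume the coefficient setup, with at least one α_r lying in the open interval (0,1). Then for every integer n ≥ 1 the coefficients ĉ_k^{(n)} are strictly decreasing in k, i.e. ĉ_0^{(n)} > ĉ_1^{(n)} > ⋯ > ĉ_{n−1}^{(n)}, and moreover ĉ_{n−1}^{(n)} > Σ_{r=0}^{m} λ_r · (τ^{−α_r}/Γ(2−α_r)) · ((1−α_r)/2) · (n−1+σ)^{−α_r}. -/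
/-- The coefficients `a_l^{(α)}`: `a_0 = σ^{1−α}`,
`a_l = (l+σ)^{1−α} − (l−1+σ)^{1−α}` for `l ≥ 1`. -/
noncomputable def aa (σ α : ℝ) : ℕ → ℝ
  | 0 => σ ^ (1 - α)
  | l + 1 => ((l : ℝ) + 1 + σ) ^ (1 - α) - ((l : ℝ) + σ) ^ (1 - α)

/-- The coefficients `b_l^{(α)} = ((l+σ)^{2−α} − (l−1+σ)^{2−α})/(2−α)
− ((l+σ)^{1−α} + (l−1+σ)^{1−α})/2`. -/
noncomputable def bb (σ α : ℝ) (l : ℕ) : ℝ :=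
  (((l : ℝ) + σ) ^ (2 - α) - ((l : ℝ) - 1 + σ) ^ (2 - α)) / (2 - α)
    - (((l : ℝ) + σ) ^ (1 - α) + ((l : ℝ) - 1 + σ) ^ (1 - α)) / 2

/-- The coefficients `c_k^{(n,α)}` of the interpolation approximation. -/
noncomputable def cc (σ α : ℝ) (n k : ℕ) : ℝ :=
  if n = 1 then aa σ α 0
  else if k = 0 then aa σ α 0 + bb σ α 1
  else if k = n - 1 then aa σ α (n - 1) - bb σ α (n - 1)
  else aa σ α k + bb σ α (k + 1) - bb σ α k

/-- The combined coefficients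
`ĉ_k^{(n)} = Σ_{r=0}^{m} λ_r (τ^{−α_r}/Γ(2−α_r)) c_k^{(n,α_r)}`. -/
noncomputable def chat (m : ℕ) (lam alf : ℕ → ℝ) (τ σ : ℝ) (n k : ℕ) : ℝ :=
  ∑ r ∈ Finset.range (m + 1),
    lam r * (τ ^ (-alf r) / Real.Gamma (2 - alf r)) * cc σ (alf r) n k



open Real intervalIntegral MeasureTheory



section aux
variable {α : ℝ}

/-- tangent line bound for convex `x ↦ x^(-α)`:  `x^{-α} - y^{-α} ≤ α x^{-α-1}(y-x)`. -/
lemma tangent_ineq (hα0 : 0 ≤ α) (hα1 : α ≤ 1) {x y : ℝ} (hx : 0 < x) (hxy : x ≤ y) :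
    x ^ (-α) - y ^ (-α) ≤ α * x ^ (-α - 1) * (y - x) := by
  set s : ℝ := (y - x) / x with hs
  have hs0 : 0 ≤ s := div_nonneg (by linarith) hx.le
  have hy : y = x * (1 + s) := by
    rw [hs, mul_add, mul_div_assoc', mul_comm x (y-x), mul_div_assoc, div_self hx.ne']; ring
  have hkey : 1 - (1 + s) ^ (-α) ≤ α * s := by
    rcases le_or_gt 1 (α * s) with h | h
    · have : (0:ℝ) < (1 + s) ^ (-α) := rpow_pos_of_pos (by linarith) _
      linarith
    · have hb : (1 + s) ^ α ≤ 1 + α * s :=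
        rpow_one_add_le_one_add_mul_self (by linarith) hα0 hα1
      have hpos : (0:ℝ) < (1 + s) ^ α := rpow_pos_of_pos (by linarith) _
      have h1 : (1 - α * s) * (1 + s) ^ α ≤ (1 - α * s) * (1 + α * s) := by
        apply mul_le_mul_of_nonneg_left hb (by linarith)
      have h2 : (1 - α * s) * (1 + α * s) ≤ 1 := by nlinarith [mul_nonneg hα0 hs0]
      have h3 : (1 - α * s) * (1 + s) ^ α ≤ 1 := le_trans h1 h2
      have h4 : 1 - α * s ≤ ((1 + s) ^ α)⁻¹ := by
        rw [← one_div]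
        exact (le_div_iff₀ hpos).mpr (by linarith)
      have h5 : ((1 + s) ^ α)⁻¹ = (1 + s) ^ (-α) := (Real.rpow_neg (by linarith) α).symm
      linarith [h4, h5 ▸ h4]
  have hxne : x ≠ 0 := hx.ne'
  have hyx : y ^ (-α) = x ^ (-α) * (1 + s) ^ (-α) := by
    rw [hy, Real.mul_rpow hx.le (by linarith)]
  have hxa : (0:ℝ) < x ^ (-α) := rpow_pos_of_pos hx _
  have hx1 : x ^ (-α - 1) * x = x ^ (-α) := by
    rw [← Real.rpow_add_one hxne (-α - 1)]; norm_num
  have hsx : s * x = y - x := by rw [hs, div_mul_cancel₀ _ hx.ne']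
  calc x ^ (-α) - y ^ (-α) = x ^ (-α) * (1 - (1 + s) ^ (-α)) := by rw [hyx]; ring
    _ ≤ x ^ (-α) * (α * s) := by apply mul_le_mul_of_nonneg_left hkey hxa.le
    _ = α * x ^ (-α - 1) * (y - x) := by rw [← hx1, ← hsx]; ring

end aux


section aux2
variable {α : ℝ}

/-- second difference of `t ↦ t^(-α)` with step 1 is nonneg (midpoint convexity via AM-GM). -/
lemma step_convex (hα0 : 0 ≤ α) {t : ℝ} (ht : 0 < t) :
    2 * (t + 1) ^ (-α) ≤ t ^ (-α) + (t + 2) ^ (-α) := by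
  have h1 : (0:ℝ) < t + 1 := by linarith
  have h2 : (0:ℝ) < t + 2 := by linarith
  have hsq : t ^ (-α/2) * t ^ (-α/2) = t ^ (-α) := by
    rw [← Real.rpow_add ht]; ring_nf
  have hsq2 : (t+2) ^ (-α/2) * (t+2) ^ (-α/2) = (t+2) ^ (-α) := by
    rw [← Real.rpow_add h2]; ring_nf
  have hamgm : 2 * (t ^ (-α/2) * (t+2) ^ (-α/2)) ≤ t ^ (-α) + (t + 2) ^ (-α) := by
    nlinarith [sq_nonneg (t ^ (-α/2) - (t+2) ^ (-α/2))]
  have hmul : t ^ (-α/2) * (t+2) ^ (-α/2) = (t * (t+2)) ^ (-α/2) :=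
    (Real.mul_rpow ht.le h2.le).symm
  have hmono : ((t+1) * (t+1)) ^ (-α/2) ≤ (t * (t+2)) ^ (-α/2) := by
    apply Real.rpow_le_rpow_of_nonpos (by positivity) (by nlinarith) (by linarith)
  have hme : ((t+1) * (t+1)) ^ (-α/2) = (t+1) ^ (-α) := by
    rw [Real.mul_rpow h1.le h1.le, ← Real.rpow_add h1]; ring_nf
  calc 2 * (t + 1) ^ (-α) = 2 * ((t+1)*(t+1)) ^ (-α/2) := by rw [hme]
    _ ≤ 2 * (t * (t+2)) ^ (-α/2) := by linarith
    _ = 2 * (t ^ (-α/2) * (t+2) ^ (-α/2)) := by rw [hmul]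
    _ ≤ _ := hamgm

/-- chord (secant) upper bound for convex `t ↦ t^(-α)` on `[x, x+1]`. -/
lemma chord_ineq (hα0 : 0 ≤ α) {x t : ℝ} (hx : 0 < x) (ht1 : x ≤ t) (ht2 : t ≤ x + 1) :
    t ^ (-α) ≤ x ^ (-α) + (t - x) * ((x + 1) ^ (-α) - x ^ (-α)) := by
  set l : ℝ := t - x with hl
  have hl0 : 0 ≤ l := by linarith
  have hl1 : l ≤ 1 := by linarith
  have hx1 : (0:ℝ) < x + 1 := by linarith
  have hgm1 : x ^ (1 - l) * (x + 1) ^ l ≤ (1 - l) * x + l * (x + 1) :=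
    Real.geom_mean_le_arith_mean2_weighted (by linarith) hl0 hx.le hx1.le (by ring)
  have hgm2 : (x ^ (-α)) ^ (1 - l) * ((x + 1) ^ (-α)) ^ l ≤
      (1 - l) * x ^ (-α) + l * (x + 1) ^ (-α) :=
    Real.geom_mean_le_arith_mean2_weighted (by linarith) hl0
      (rpow_pos_of_pos hx _).le (rpow_pos_of_pos hx1 _).le (by ring)
  have hid : (x ^ (-α)) ^ (1 - l) * ((x + 1) ^ (-α)) ^ l
      = (x ^ (1 - l) * (x + 1) ^ l) ^ (-α) := by
    rw [Real.mul_rpow (rpow_pos_of_pos hx (1-l)).le (rpow_pos_of_pos hx1 l).le,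
      ← Real.rpow_mul hx.le, ← Real.rpow_mul hx1.le, ← Real.rpow_mul hx.le,
      ← Real.rpow_mul hx1.le, mul_comm (1-l) (-α), mul_comm l (-α)]
  have hgpos : 0 < x ^ (1 - l) * (x + 1) ^ l :=
    mul_pos (rpow_pos_of_pos hx _) (rpow_pos_of_pos hx1 _)
  have htg : t ^ (-α) ≤ (x ^ (1 - l) * (x + 1) ^ l) ^ (-α) := by
    apply Real.rpow_le_rpow_of_nonpos hgpos (by linarith [hgm1]) (by linarith)
  calc t ^ (-α) ≤ (x ^ (1 - l) * (x + 1) ^ l) ^ (-α) := htg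
    _ = (x ^ (-α)) ^ (1 - l) * ((x + 1) ^ (-α)) ^ l := hid.symm
    _ ≤ (1 - l) * x ^ (-α) + l * (x + 1) ^ (-α) := hgm2
    _ = x ^ (-α) + (t - x) * ((x + 1) ^ (-α) - x ^ (-α)) := by rw [← hl]; ring

end aux2


noncomputable def aR (α x : ℝ) : ℝ := (x+1) ^ (1-α) - x ^ (1-α)
noncomputable def bR (α x : ℝ) : ℝ :=
  ((x+1) ^ (2-α) - x ^ (2-α)) / (2-α) - ((x+1) ^ (1-α) + x ^ (1-α)) / 2
noncomputable def cM (α x : ℝ) : ℝ := aR α x + bR α (x+1) - bR α x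

section ints
variable {α : ℝ}

/-- integrability of `(c + d t) * ((x+e)^(-α))`-type functions on positive intervals -/
lemma myII {a b : ℝ} (e : ℝ) (c : ℝ) (h : ∀ t ∈ Set.uIcc a b, t + c ≠ 0) (g : ℝ → ℝ)
    (hg : Continuous g) :
    IntervalIntegrable (fun t => g t * (t + c) ^ e) volume a b := by
  apply ContinuousOn.intervalIntegrable
  exact hg.continuousOn.mul
    (((continuous_id.add continuous_const).continuousOn).rpow_const fun t ht => Or.inl (h t ht))

lemma uIcc_pos {a b : ℝ} (ha : 0 < a) (hab : a ≤ b) : ∀ t ∈ Set.uIcc a b, 0 < t := by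
  intro t ht
  rw [Set.uIcc_of_le hab] at ht
  exact lt_of_lt_of_le ha ht.1

lemma int_linear (hα : α < 1) {x y : ℝ} (hx : 0 < x) (hxy : x ≤ y) (c d : ℝ) :
    ∫ t in x..y, (c + d*t) * ((1-α) * t ^ (-α)) =
      c * (y ^ (1-α) - x ^ (1-α)) + (d * (1-α)/(2-α)) * (y ^ (2-α) - x ^ (2-α)) := by
  have hne : ∀ t ∈ Set.uIcc x y, t ≠ 0 := fun t ht => (uIcc_pos hx hxy t ht).ne'
  have h1 : ∫ t in x..y, t ^ (-α) = (y ^ (-α+1) - x ^ (-α+1)) / (-α+1) :=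
    integral_rpow (Or.inl (by linarith))
  have h2 : ∫ t in x..y, t ^ (-α+1) = (y ^ (-α+1+1) - x ^ (-α+1+1)) / (-α+1+1) :=
    integral_rpow (Or.inl (by linarith))
  have hsplit : (fun t => (c + d*t) * ((1-α) * t ^ (-α))) =
      fun t => (c*(1-α)) * t ^ (-α) + (d*(1-α)) * (t ^ (-α) * t) := by
    funext t; ring
  have hI1 : IntervalIntegrable (fun t => (c*(1-α)) * t ^ (-α)) volume x y := by
    simpa using myII (-α) 0 (by simpa using hne) (fun _ => c*(1-α)) continuous_const
  have hI2 : IntervalIntegrable (fun t => (d*(1-α)) * (t ^ (-α) * t)) volume x y := by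
    have := myII (-α) 0 (by simpa using hne) (fun t => (d*(1-α)) * t)
      (continuous_const.mul continuous_id)
    simpa [mul_assoc, mul_comm, mul_left_comm] using this
  rw [hsplit, integral_add hI1 hI2, intervalIntegral.integral_const_mul, intervalIntegral.integral_const_mul, h1]
  have hcongr : ∫ t in x..y, t ^ (-α) * t = ∫ t in x..y, t ^ (-α+1) := by
    apply integral_congr
    intro t ht
    simp only []
    rw [Real.rpow_add_one (hne t ht)]
  rw [hcongr, h2]
  have e1 : -α+1 = 1-α := by ring
  have e2 : (1:ℝ)-α+1 = 2-α := by ring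
  rw [e1, e2]
  have hne1 : (1:ℝ) - α ≠ 0 := by linarith
  have hne2 : (2:ℝ) - α ≠ 0 := by linarith
  field_simp

lemma b_int (hα : α < 1) {x : ℝ} (hx : 0 < x) :
    bR α x = ∫ t in x..x+1, (x + 1/2 - t) * ((1-α) * t ^ (-α)) := by
  have h := int_linear hα hx (by linarith : x ≤ x + 1) (x + 1/2) (-1)
  have hc : ∀ t : ℝ, (x + 1/2 + (-1)*t) = (x + 1/2 - t) := fun t => by ring
  simp only [hc] at h
  rw [h]
  have q1 : (x+1) ^ (2-α) = (x+1) ^ (1-α) * (x+1) := by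
    rw [← Real.rpow_add_one (by positivity : (x:ℝ)+1 ≠ 0)]; ring_nf
  have q2 : x ^ (2-α) = x ^ (1-α) * x := by
    rw [← Real.rpow_add_one hx.ne']; ring_nf
  unfold bR
  rw [q1, q2]
  have h2 : (2:ℝ) - α ≠ 0 := by linarith
  field_simp
  ring

lemma ab_int (hα : α < 1) {x : ℝ} (hx : 0 < x) :
    aR α x - bR α x = ∫ t in x..x+1, (t - x + 1/2) * ((1-α) * t ^ (-α)) := by
  have h := int_linear hα hx (by linarith : x ≤ x + 1) (1/2 - x) 1
  have hc : ∀ t : ℝ, (1/2 - x + 1*t) = (t - x + 1/2) := fun t => by ring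
  simp only [hc] at h
  rw [h]
  have q1 : (x+1) ^ (2-α) = (x+1) ^ (1-α) * (x+1) := by
    rw [← Real.rpow_add_one (by positivity : (x:ℝ)+1 ≠ 0)]; ring_nf
  have q2 : x ^ (2-α) = x ^ (1-α) * x := by
    rw [← Real.rpow_add_one hx.ne']; ring_nf
  unfold aR bR
  rw [q1, q2]
  have h2 : (2:ℝ) - α ≠ 0 := by linarith
  field_simp
  ring

end ints

section ints
variable {α : ℝ}

lemma intgA {a b : ℝ} (β e : ℝ) (h : ∀ t ∈ Set.uIcc a b, (0:ℝ) < t) (g : ℝ → ℝ)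
    (hg : Continuous g) :
    IntervalIntegrable (fun t => g t * (β * t ^ e)) volume a b := by
  apply ContinuousOn.intervalIntegrable
  exact hg.continuousOn.mul (continuousOn_const.mul
    ((continuousOn_id.rpow_const fun t ht => Or.inl (h t ht).ne')))

lemma intgB {a b : ℝ} (c β e : ℝ) (h : ∀ t ∈ Set.uIcc a b, (0:ℝ) < t + c) (g : ℝ → ℝ)
    (hg : Continuous g) :
    IntervalIntegrable (fun t => g t * (β * (t + c) ^ e)) volume a b := by
  apply ContinuousOn.intervalIntegrable
  exact hg.continuousOn.mul (continuousOn_const.mul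
    ((((continuous_id.add continuous_const).continuousOn).rpow_const
      fun t ht => Or.inl (h t ht).ne')))

/-- integral of linear weight over unit interval -/
lemma int_weight (x c d : ℝ) : ∫ t in x..x+1, (c + d*t) = c + d*x + d/2 := by
  have h1 : ∫ t in x..x+1, (c + d*t) = (∫ t in x..x+1, (c:ℝ)) + ∫ t in x..x+1, d*t := by
    apply integral_add intervalIntegrable_const
    exact (continuous_const.mul continuous_id).intervalIntegrable _ _
  rw [h1, intervalIntegral.integral_const, intervalIntegral.integral_const_mul, integral_id]
  simp; ring

/-- `bR` as integral of the deviation from midpoint value -/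
lemma b_int' (hα : α < 1) {x : ℝ} (hx : 0 < x) :
    bR α x = ∫ t in x..x+1, (x + 1/2 - t) * ((1-α) * (t ^ (-α) - (x+1/2) ^ (-α))) := by
  have hm : (0:ℝ) < x + 1/2 := by linarith
  have hI1 : IntervalIntegrable (fun t => (x + 1/2 - t) * ((1-α) * t ^ (-α))) volume x (x+1) :=
    intgA (1-α) (-α) (uIcc_pos hx (by linarith)) _ (by continuity)
  have hI2 : IntervalIntegrable (fun t => (x + 1/2 - t) * ((1-α) * (x+1/2) ^ (-α)))
      volume x (x+1) := ((continuous_const.sub continuous_id).mul continuous_const).intervalIntegrable _ _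
  have hz : ∫ t in x..x+1, (x + 1/2 - t) * ((1-α) * (x+1/2) ^ (-α)) = 0 := by
    have : (fun t : ℝ => (x + 1/2 - t) * ((1-α) * (x+1/2) ^ (-α))) =
        fun t : ℝ => ((x + 1/2) + (-1)*t) * ((1-α) * (x+1/2) ^ (-α)) := by funext t; ring
    rw [this, intervalIntegral.integral_mul_const, int_weight]
    ring
  have hsub : ∫ t in x..x+1, (x + 1/2 - t) * ((1-α) * (t ^ (-α) - (x+1/2) ^ (-α))) =
      (∫ t in x..x+1, (x + 1/2 - t) * ((1-α) * t ^ (-α))) -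
      ∫ t in x..x+1, (x + 1/2 - t) * ((1-α) * (x+1/2) ^ (-α)) := by
    rw [← integral_sub hI1 hI2]
    apply integral_congr
    intro t ht
    ring
  rw [hsub, hz, sub_zero, ← b_int hα hx]

lemma deviation_nonneg (hα0 : 0 ≤ α) (hα : α < 1) {m t : ℝ} (hm : 0 < m) (ht : 0 < t) :
    0 ≤ (m - t) * ((1-α) * (t ^ (-α) - m ^ (-α))) := by
  rcases le_total t m with h | h
  · apply mul_nonneg (by linarith)
    apply mul_nonneg (by linarith)
    have := Real.rpow_le_rpow_of_nonpos ht h (by linarith : -α ≤ 0)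
    linarith
  · have h5 := Real.rpow_le_rpow_of_nonpos hm h (by linarith : -α ≤ 0)
    have hC : (1-α) * (t ^ (-α) - m ^ (-α)) ≤ 0 :=
      mul_nonpos_iff.mpr (Or.inl ⟨by linarith, by linarith⟩)
    exact mul_nonneg_iff.mpr (Or.inr ⟨by linarith, hC⟩)

lemma bR_nonneg (hα0 : 0 ≤ α) (hα : α < 1) {x : ℝ} (hx : 0 < x) : 0 ≤ bR α x := by
  rw [b_int' hα hx]
  apply integral_nonneg (by linarith : x ≤ x + 1)
  intro t ht
  exact deviation_nonneg hα0 hα (by linarith) (lt_of_lt_of_le hx ht.1)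

lemma bR_pos (hα0 : 0 < α) (hα : α < 1) {x : ℝ} (hx : 0 < x) : 0 < bR α x := by
  rw [b_int' hα hx]
  set W : ℝ → ℝ := fun t => (x + 1/2 - t) * ((1-α) * (t ^ (-α) - (x+1/2) ^ (-α))) with hW
  have hIW : ∀ a b : ℝ, x ≤ a → a ≤ b → b ≤ x + 1 → IntervalIntegrable W volume a b := by
    intro a b ha hab hb
    have hapos : 0 < a := lt_of_lt_of_le hx ha
    have hC : IntervalIntegrable (fun t : ℝ => (x + 1/2 - t) * ((1-α) * (x+1/2) ^ (-α)))
        volume a b := ((continuous_const.sub continuous_id).mul continuous_const).intervalIntegrable _ _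
    have h2 : IntervalIntegrable (fun t : ℝ => (x + 1/2 - t) * ((1-α) * t ^ (-α))) volume a b :=
      intgA (1-α) (-α) (uIcc_pos hapos hab) _ (by continuity)
    have := h2.sub hC
    apply this.congr
    · intro t _
      simp only [hW]; ring
  have hsplit : ∫ t in x..x+1, W t = (∫ t in x..x+(1/2:ℝ), W t) + ∫ t in x+(1/2:ℝ)..x+1, W t := by
    rw [integral_add_adjacent_intervals (hIW _ _ le_rfl (by linarith) (by linarith))
      (hIW _ _ (by linarith) (by linarith) le_rfl)]
  rw [hsplit]
  have h1 : 0 < ∫ t in x..x+(1/2:ℝ), W t := by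
    apply intervalIntegral_pos_of_pos_on (hIW _ _ le_rfl (by linarith) (by linarith))
    · intro t ht
      obtain ⟨ht1, ht2⟩ := ht
      have htpos : 0 < t := lt_trans hx ht1
      apply mul_pos (by linarith)
      apply mul_pos (by linarith)
      have := Real.rpow_lt_rpow_of_neg htpos (by linarith : t < x + 1/2) (by linarith : -α < 0)
      linarith
    · linarith
  have h2 : 0 ≤ ∫ t in x+(1/2:ℝ)..x+1, W t := by
    apply integral_nonneg (by linarith : x+(1/2:ℝ) ≤ x + 1)
    intro t ht
    exact deviation_nonneg hα0.le hα (by linarith) (by linarith [ht.1])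
  linarith

lemma last_ge (hα0 : 0 ≤ α) (hα : α < 1) {x : ℝ} (hx : 0 < x) :
    (1-α)/2 * (x+1) ^ (-α) < aR α x - bR α x := by
  rw [ab_int hα hx]
  have hxx : x ≤ x + 1 := by linarith
  have hI1 : IntervalIntegrable (fun t : ℝ => (t - x + 1/2) * ((1-α) * (x+1) ^ (-α)))
      volume x (x+1) := ((continuous_id.sub continuous_const).add continuous_const).mul
        continuous_const |>.intervalIntegrable _ _
  have hI2 : IntervalIntegrable (fun t => (t - x + 1/2) * ((1-α) * t ^ (-α))) volume x (x+1) :=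
    intgA (1-α) (-α) (uIcc_pos hx hxx) _ (by continuity)
  have hmono : ∫ t in x..x+1, (t - x + 1/2) * ((1-α) * (x+1) ^ (-α)) ≤
      ∫ t in x..x+1, (t - x + 1/2) * ((1-α) * t ^ (-α)) := by
    apply integral_mono_on hxx hI1 hI2
    intro t ht
    apply mul_le_mul_of_nonneg_left _ (by linarith [ht.1] : (0:ℝ) ≤ t - x + 1/2)
    apply mul_le_mul_of_nonneg_left _ (by linarith : (0:ℝ) ≤ 1 - α)
    exact Real.rpow_le_rpow_of_nonpos (lt_of_lt_of_le hx ht.1) ht.2 (by linarith)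
  have hval : ∫ t in x..x+1, (t - x + 1/2) * ((1-α) * (x+1) ^ (-α)) =
      (1-α) * (x+1) ^ (-α) := by
    have : (fun t : ℝ => (t - x + 1/2) * ((1-α) * (x+1) ^ (-α))) =
        fun t : ℝ => ((1/2 - x) + 1*t) * ((1-α) * (x+1) ^ (-α)) := by funext t; ring
    rw [this, intervalIntegral.integral_mul_const, int_weight]
    ring
  have hpos : 0 < (1-α) * (x+1) ^ (-α) :=
    mul_pos (by linarith) (rpow_pos_of_pos (by linarith) _)
  calc (1-α)/2 * (x+1) ^ (-α) < (1-α) * (x+1) ^ (-α) := by nlinarith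
    _ = ∫ t in x..x+1, (t - x + 1/2) * ((1-α) * (x+1) ^ (-α)) := hval.symm
    _ ≤ _ := hmono

end ints

section s5
variable {α : ℝ}

lemma cM_diff (hα : α < 1) {x : ℝ} (hx : 0 < x) :
    cM α x - cM α (x+1) = ∫ t in x..(x+1),
      ((t - x + 1/2) * ((1-α) * t ^ (-α)) + (2*x - 2*t) * ((1-α) * (t+1) ^ (-α))
        - (x + 1/2 - t) * ((1-α) * (t+2) ^ (-α))) := by
  have hx1 : (0:ℝ) < x + 1 := by linarith
  have hx2 : (0:ℝ) < x + 2 := by linarith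
  have e1 : cM α x = (∫ t in x..(x+1), (t - x + 1/2) * ((1-α) * t ^ (-α)))
      + ∫ t in (x+1)..(x+2), (x + 3/2 - t) * ((1-α) * t ^ (-α)) := by
    have h1 := ab_int hα hx
    have h2 := b_int hα hx1
    simp only [show x+1+1 = x+2 from by ring, show x+1+(1/2:ℝ) = x+3/2 from by ring] at h2
    unfold cM
    rw [← h1, ← h2]; ring
  have e2 : cM α (x+1) = (∫ t in (x+1)..(x+2), (t - x - 1/2) * ((1-α) * t ^ (-α)))
      + ∫ t in (x+2)..(x+3), (x + 5/2 - t) * ((1-α) * t ^ (-α)) := by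
    have h1 := ab_int hα hx1
    have h2 := b_int hα hx2
    simp only [show x+1+1 = x+2 from by ring, show x+2+1 = x+3 from by ring,
      show x+2+(1/2:ℝ) = x+5/2 from by ring] at h1 h2
    have h1' : aR α (x+1) - bR α (x+1)
        = ∫ t in (x+1)..(x+2), (t - x - 1/2) * ((1-α) * t ^ (-α)) := by
      rw [h1]
      apply integral_congr
      intro t _
      ring_nf
    unfold cM
    rw [← h1', ← h2]; ring
  have hmid : (∫ t in (x+1)..(x+2), (x + 3/2 - t) * ((1-α) * t ^ (-α)))
      - (∫ t in (x+1)..(x+2), (t - x - 1/2) * ((1-α) * t ^ (-α)))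
      = ∫ t in (x+1)..(x+2), (2*x + 2 - 2*t) * ((1-α) * t ^ (-α)) := by
    rw [← integral_sub (intgA _ _ (uIcc_pos hx1 (by linarith)) _ (by continuity))
      (intgA _ _ (uIcc_pos hx1 (by linarith)) _ (by continuity))]
    apply integral_congr
    intro t _
    ring
  have hsh1 : (∫ t in (x+1)..(x+2), (2*x + 2 - 2*t) * ((1-α) * t ^ (-α)))
      = ∫ t in x..(x+1), (2*x - 2*t) * ((1-α) * (t+1) ^ (-α)) := by
    have := integral_comp_add_right (f := fun t => (2*x + 2 - 2*t) * ((1-α) * t ^ (-α))) 1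
      (a := x) (b := x+1)
    simp only [show x+1+1 = x+2 from by ring] at this
    rw [← this]
    apply integral_congr
    intro t _
    ring_nf
  have hsh2 : (∫ t in (x+2)..(x+3), (x + 5/2 - t) * ((1-α) * t ^ (-α)))
      = ∫ t in x..(x+1), (x + 1/2 - t) * ((1-α) * (t+2) ^ (-α)) := by
    have := integral_comp_add_right (f := fun t => (x + 5/2 - t) * ((1-α) * t ^ (-α))) 2
      (a := x) (b := x+1)
    simp only [show x+1+2 = x+3 from by ring] at this
    rw [← this]
    apply integral_congr
    intro t _
    ring_nf
  have hcomb : (∫ t in x..(x+1), (t - x + 1/2) * ((1-α) * t ^ (-α)))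
      + (∫ t in x..(x+1), (2*x - 2*t) * ((1-α) * (t+1) ^ (-α)))
      - (∫ t in x..(x+1), (x + 1/2 - t) * ((1-α) * (t+2) ^ (-α)))
      = ∫ t in x..(x+1),
      ((t - x + 1/2) * ((1-α) * t ^ (-α)) + (2*x - 2*t) * ((1-α) * (t+1) ^ (-α))
        - (x + 1/2 - t) * ((1-α) * (t+2) ^ (-α))) := by
    have hA : IntervalIntegrable (fun t => (t - x + 1/2) * ((1-α) * t ^ (-α))) volume x (x+1) :=
      intgA _ _ (uIcc_pos hx (by linarith)) _ (by continuity)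
    have hB : IntervalIntegrable (fun t => (2*x - 2*t) * ((1-α) * (t+1) ^ (-α))) volume x (x+1) :=
      intgB 1 _ _ (fun t ht => by linarith [(uIcc_pos hx (by linarith)) t ht]) _ (by continuity)
    have hC : IntervalIntegrable (fun t => (x + 1/2 - t) * ((1-α) * (t+2) ^ (-α))) volume x (x+1) :=
      intgB 2 _ _ (fun t ht => by linarith [(uIcc_pos hx (by linarith)) t ht]) _ (by continuity)
    rw [← integral_add hA hB, ← intervalIntegral.integral_sub (hA.add hB) hC]
  rw [e1, e2, ← hcomb, ← hsh1, ← hsh2, ← hmid]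
  ring

lemma W_lower (hα0 : 0 ≤ α) (hα : α < 1) {x t : ℝ} (hx : 0 < x) (ht1 : x ≤ t) (ht2 : t ≤ x+1) :
    (1-α) * ((t+1) ^ (-α) - (t+2) ^ (-α)) ≤
      (t - x + 1/2) * ((1-α) * t ^ (-α)) + (2*x - 2*t) * ((1-α) * (t+1) ^ (-α))
        - (x + 1/2 - t) * ((1-α) * (t+2) ^ (-α)) := by
  have htpos : 0 < t := lt_of_lt_of_le hx ht1
  have hstep := step_convex hα0 htpos
  have hAB : (1-α) * ((t+1) ^ (-α) - (t+2) ^ (-α)) ≤ (1-α) * (t ^ (-α) - (t+1) ^ (-α)) := by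
    nlinarith
  nlinarith [mul_nonneg (by linarith : (0:ℝ) ≤ t - x + 1/2)
    (by linarith : (0:ℝ) ≤ (1-α) * (t ^ (-α) - (t+1) ^ (-α)) - (1-α) * ((t+1) ^ (-α) - (t+2) ^ (-α)))]

lemma B_nonneg (hα0 : 0 ≤ α) (hα : α < 1) {t : ℝ} (ht : 0 < t) :
    0 ≤ (1-α) * ((t+1) ^ (-α) - (t+2) ^ (-α)) := by
  have := Real.rpow_le_rpow_of_nonpos (by linarith : (0:ℝ) < t+1) (by linarith : t+1 ≤ t+2)
    (by linarith : -α ≤ 0)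
  nlinarith

lemma B_pos (hα0 : 0 < α) (hα : α < 1) {t : ℝ} (ht : 0 < t) :
    0 < (1-α) * ((t+1) ^ (-α) - (t+2) ^ (-α)) := by
  have := Real.rpow_lt_rpow_of_neg (by linarith : (0:ℝ) < t+1) (by linarith : t+1 < t+2)
    (by linarith : -α < 0)
  nlinarith

lemma cM_anti (hα0 : 0 ≤ α) (hα : α < 1) {x : ℝ} (hx : 0 < x) : cM α (x+1) ≤ cM α x := by
  rw [← sub_nonneg, cM_diff hα hx]
  apply integral_nonneg (by linarith : x ≤ x + 1)
  intro t ht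
  exact le_trans (B_nonneg hα0 hα (lt_of_lt_of_le hx ht.1)) (W_lower hα0 hα hx ht.1 ht.2)

lemma cM_anti_strict (hα0 : 0 < α) (hα : α < 1) {x : ℝ} (hx : 0 < x) : cM α (x+1) < cM α x := by
  rw [← sub_pos, cM_diff hα hx]
  apply intervalIntegral_pos_of_pos_on
  · refine ((intgA _ _ (uIcc_pos hx (by linarith)) _ (by continuity)).add
      (intgB 1 _ _ (fun t ht => by linarith [(uIcc_pos hx (by linarith)) t ht]) _ (by continuity))).sub
      (intgB 2 _ _ (fun t ht => by linarith [(uIcc_pos hx (by linarith)) t ht]) _ (by continuity))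
  · intro t ht
    exact lt_of_lt_of_le (B_pos hα0 hα (lt_trans hx ht.1))
      (W_lower hα0.le hα hx ht.1.le ht.2.le)
  · linarith

end s5

section s6
variable {α : ℝ}

/-- integral of a quadratic `u ↦ c1*u + c2*u^2` over `[0,1]` after shifting -/
lemma int_shift_quad (p c1 c2 : ℝ) :
    ∫ t in p..(p+1), (c1*(t-p) + c2*(t-p)^2) = c1/2 + c2/3 := by
  have h : (fun t : ℝ => c1*(t-p) + c2*(t-p)^2) = fun t => (fun u => c1*u + c2*u^2) (t - p) := by
    funext t; ring
  rw [h, integral_comp_sub_right (fun u => c1*u + c2*u^2) p]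
  have h0 : p - p = 0 := by ring
  have h1 : p + 1 - p = 1 := by ring
  rw [h0, h1]
  have hadd : ∫ u in (0:ℝ)..1, (c1*u + c2*u^2) =
      (∫ u in (0:ℝ)..1, c1*u) + ∫ u in (0:ℝ)..1, c2*u^2 := by
    apply intervalIntegral.integral_add
    · exact (continuous_const.mul continuous_id).intervalIntegrable _ _
    · exact (continuous_const.mul (continuous_pow 2)).intervalIntegrable _ _
  rw [hadd, intervalIntegral.integral_const_mul, intervalIntegral.integral_const_mul, integral_id, integral_pow]
  norm_num
  ring

/-- upper bound for `bR` -/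
lemma b_upper (hα0 : 0 ≤ α) (hα : α < 1) {p : ℝ} (hp : 0 < p) :
    bR α p ≤ α*(1-α)*p^(-α-1)/12 := by
  rw [b_int' hα hp]
  set m : ℝ := p + 1/2 with hm
  have hmp : 0 < m := by rw [hm]; linarith
  have hpt : ∀ t ∈ Set.Icc p (p+1), (p + 1/2 - t) * ((1-α) * (t ^ (-α) - m ^ (-α)))
      ≤ α*(1-α)*p^(-α-1) * (t-m)^2 := by
    intro t ht
    obtain ⟨ht1, ht2⟩ := ht
    have htp : 0 < t := lt_of_lt_of_le hp ht1
    rcases le_total t m with h | h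
    · have htan := tangent_ineq hα0 hα.le htp h
      have hcomp : t ^ (-α-1) ≤ p ^ (-α-1) :=
        Real.rpow_le_rpow_of_nonpos hp ht1 (by linarith)
      have h1 : t ^ (-α) - m ^ (-α) ≤ α * p^(-α-1) * (m - t) := by
        calc t ^ (-α) - m ^ (-α) ≤ α * t ^ (-α-1) * (m - t) := htan
          _ ≤ α * p ^ (-α-1) * (m - t) := by
              apply mul_le_mul_of_nonneg_right _ (by linarith)
              exact mul_le_mul_of_nonneg_left hcomp hα0
      have hw : (0:ℝ) ≤ p + 1/2 - t := by rw [hm] at h; linarith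
      have hmt : p + 1/2 - t = m - t := by rw [hm]
      rw [hmt]
      calc (m - t) * ((1-α) * (t ^ (-α) - m ^ (-α)))
          ≤ (m - t) * ((1-α) * (α * p^(-α-1) * (m - t))) := by
            apply mul_le_mul_of_nonneg_left _ (by rw [hmt] at hw; exact hw)
            exact mul_le_mul_of_nonneg_left h1 (by linarith)
        _ = α*(1-α)*p^(-α-1) * (t-m)^2 := by ring
    · have htan := tangent_ineq hα0 hα.le hmp h
      have hcomp : m ^ (-α-1) ≤ p ^ (-α-1) :=
        Real.rpow_le_rpow_of_nonpos hp (by rw [hm]; linarith) (by linarith)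
      have h1 : m ^ (-α) - t ^ (-α) ≤ α * p^(-α-1) * (t - m) := by
        calc m ^ (-α) - t ^ (-α) ≤ α * m ^ (-α-1) * (t - m) := htan
          _ ≤ α * p ^ (-α-1) * (t - m) := by
              apply mul_le_mul_of_nonneg_right _ (by linarith)
              exact mul_le_mul_of_nonneg_left hcomp hα0
      have hmt : p + 1/2 - t = m - t := by rw [hm]
      rw [hmt]
      calc (m - t) * ((1-α) * (t ^ (-α) - m ^ (-α)))
          = (t - m) * ((1-α) * (m ^ (-α) - t ^ (-α))) := by ring
        _ ≤ (t - m) * ((1-α) * (α * p^(-α-1) * (t - m))) := by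
            apply mul_le_mul_of_nonneg_left _ (by linarith)
            exact mul_le_mul_of_nonneg_left h1 (by linarith)
        _ = α*(1-α)*p^(-α-1) * (t-m)^2 := by ring
  have hIl : IntervalIntegrable
      (fun t => (p + 1/2 - t) * ((1-α) * (t ^ (-α) - m ^ (-α)))) volume p (p+1) := by
    have h1 : IntervalIntegrable (fun t => (p + 1/2 - t) * ((1-α) * t ^ (-α))) volume p (p+1) :=
      intgA _ _ (uIcc_pos hp (by linarith)) _ (by continuity)
    have h2 : IntervalIntegrable (fun t : ℝ => (p + 1/2 - t) * ((1-α) * m ^ (-α)))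
        volume p (p+1) :=
      ((continuous_const.sub continuous_id).mul continuous_const).intervalIntegrable _ _
    have := h1.sub h2
    apply this.congr
    intro t _
    beta_reduce
    ring
  have hIr : IntervalIntegrable (fun t => α*(1-α)*p^(-α-1) * (t-m)^2) volume p (p+1) :=
    (continuous_const.mul ((continuous_id.sub continuous_const).pow 2)).intervalIntegrable _ _
  have hmono := integral_mono_on (by linarith : p ≤ p+1) hIl hIr hpt
  have hval : ∫ t in p..(p+1), α*(1-α)*p^(-α-1) * (t-m)^2 = α*(1-α)*p^(-α-1)/12 := by
    set K : ℝ := α*(1-α)*p^(-α-1) with hK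
    have h : (fun t : ℝ => K * (t-m)^2) = fun t => ((-K)*(t-p) + K*(t-p)^2 + K/4) := by
      funext t; rw [hm]; ring
    rw [h]
    have hadd : ∫ t in p..(p+1), ((-K)*(t-p) + K*(t-p)^2 + K/4)
        = (∫ t in p..(p+1), ((-K)*(t-p) + K*(t-p)^2)) + ∫ t in p..(p+1), K/4 := by
      apply intervalIntegral.integral_add _ intervalIntegrable_const
      apply Continuous.intervalIntegrable
      continuity
    rw [hadd, int_shift_quad, intervalIntegral.integral_const]
    simp
    ring
  calc _ ≤ _ := hmono
    _ = _ := hval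

end s6

section s7
variable {α : ℝ}

lemma two_rpow_lb (hα0 : 0 ≤ α) : 1 + 0.6931*α ≤ (2:ℝ)^α := by
  rw [Real.rpow_def_of_pos (by norm_num : (0:ℝ) < 2)]
  have h1 := Real.add_one_le_exp (Real.log 2 * α)
  have h2 := Real.log_two_gt_d9
  nlinarith

lemma XY_bound (hα0 : 0 ≤ α) {σ : ℝ} (hσ1 : 1/2 ≤ σ) (hσ2 : σ ≤ 1) :
    (1 + 0.6931*α) * (σ+1)^(-α) ≤ σ^(-α) := by
  have hσp : (0:ℝ) < σ := by linarith
  have h2σ : (σ+1)^(-α) ≤ (2*σ)^(-α) :=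
    Real.rpow_le_rpow_of_nonpos (by linarith) (by linarith) (by linarith)
  have hmul : (2*σ)^(-α) = (2:ℝ)^(-α) * σ^(-α) := Real.mul_rpow (by norm_num) hσp.le
  have hpow : (2:ℝ)^α * (2:ℝ)^(-α) = 1 := by
    rw [← Real.rpow_add (by norm_num : (0:ℝ) < 2)]
    norm_num
  have hY : (0:ℝ) ≤ (σ+1)^(-α) := (rpow_pos_of_pos (by linarith) _).le
  have h2a := two_rpow_lb hα0
  calc (1 + 0.6931*α) * (σ+1)^(-α) ≤ (2:ℝ)^α * (σ+1)^(-α) :=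
        mul_le_mul_of_nonneg_right h2a hY
    _ ≤ (2:ℝ)^α * ((2:ℝ)^(-α) * σ^(-α)) := by
        apply mul_le_mul_of_nonneg_left _ (rpow_pos_of_pos (by norm_num) _).le
        rw [← hmul]; exact h2σ
    _ = σ^(-α) := by rw [← mul_assoc, hpow, one_mul]

set_option maxHeartbeats 1000000 in
lemma head_strict (hα0 : 0 < α) (hα : α < 1) {σ : ℝ} (hσ1 : 1/2 ≤ σ) (hσ2 : σ ≤ 1) :
    (2/σ) * (σ^(1-α) * (σ - (1 - α/2)) / (2-α)) <
      σ^(1-α) + 2*bR α σ - aR α σ - bR α (σ+1) := by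
  have hσp : (0:ℝ) < σ := by linarith
  set X : ℝ := σ^(-α) with hXdef
  set Y : ℝ := (σ+1)^(-α) with hYdef
  have hXpos : 0 < X := rpow_pos_of_pos hσp _
  have hYpos : 0 < Y := rpow_pos_of_pos (by linarith) _
  have hX : σ^(1-α) = X * σ := by
    rw [show (1:ℝ)-α = -α+1 from by ring, Real.rpow_add_one hσp.ne']
  -- step 1 : a₀ + 2b₁ - a₁ as σ^β - I1
  have hstep1 : σ^(1-α) + 2*bR α σ - aR α σ =
      σ^(1-α) - ∫ t in σ..(σ+1), (2*t-2*σ)*((1-α)*t^(-α)) := by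
    have hb := b_int hα hσp
    have hab := ab_int hα hσp
    have hIb : IntervalIntegrable (fun t => (σ + 1/2 - t) * ((1-α) * t ^ (-α)))
        volume σ (σ+1) := intgA _ _ (uIcc_pos hσp (by linarith)) _ (by continuity)
    have hIab : IntervalIntegrable (fun t => (t - σ + 1/2) * ((1-α) * t ^ (-α)))
        volume σ (σ+1) := intgA _ _ (uIcc_pos hσp (by linarith)) _ (by continuity)
    have hdiff : (∫ t in σ..(σ+1), (σ + 1/2 - t) * ((1-α) * t ^ (-α)))
        - (∫ t in σ..(σ+1), (t - σ + 1/2) * ((1-α) * t ^ (-α)))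
        = - ∫ t in σ..(σ+1), (2*t-2*σ)*((1-α)*t^(-α)) := by
      rw [← intervalIntegral.integral_sub hIb hIab, ← intervalIntegral.integral_neg]
      apply integral_congr
      intro t _
      ring
    linarith [hdiff, hb, hab]
  -- step 2 : chord bound for I1
  have hstep2 : (∫ t in σ..(σ+1), (2*t-2*σ)*((1-α)*t^(-α)))
      ≤ (1-α)*X + 2*(1-α)*(Y-X)/3 := by
    have hIl : IntervalIntegrable (fun t => (2*t-2*σ)*((1-α)*t^(-α))) volume σ (σ+1) :=
      intgA _ _ (uIcc_pos hσp (by linarith)) _ (by continuity)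
    have hIr : IntervalIntegrable (fun t => 2*(1-α)*X*(t-σ) + 2*(1-α)*(Y-X)*(t-σ)^2)
        volume σ (σ+1) := by
      apply Continuous.intervalIntegrable
      continuity
    have hmono : (∫ t in σ..(σ+1), (2*t-2*σ)*((1-α)*t^(-α)))
        ≤ ∫ t in σ..(σ+1), (2*(1-α)*X*(t-σ) + 2*(1-α)*(Y-X)*(t-σ)^2) := by
      apply integral_mono_on (by linarith) hIl hIr
      intro t ht
      obtain ⟨ht1, ht2⟩ := ht
      have hch := chord_ineq hα0.le hσp ht1 ht2
      have hw : (0:ℝ) ≤ (2*t-2*σ)*(1-α) := by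
        apply mul_nonneg <;> linarith
      calc (2*t-2*σ)*((1-α)*t^(-α)) = ((2*t-2*σ)*(1-α))*t^(-α) := by ring
        _ ≤ ((2*t-2*σ)*(1-α))*(σ^(-α) + (t-σ)*((σ+1)^(-α) - σ^(-α))) :=
            mul_le_mul_of_nonneg_left hch hw
        _ = 2*(1-α)*X*(t-σ) + 2*(1-α)*(Y-X)*(t-σ)^2 := by rw [← hXdef, ← hYdef]; ring
    calc _ ≤ _ := hmono
      _ = 2*(1-α)*X/2 + 2*(1-α)*(Y-X)/3 := int_shift_quad σ _ _
      _ = (1-α)*X + 2*(1-α)*(Y-X)/3 := by ring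
  -- step 3 : b₂ bound
  have hstep3 : bR α (σ+1) ≤ α*(1-α)*(Y/(σ+1))/12 := by
    have h := b_upper hα0.le hα (by linarith : (0:ℝ) < σ+1)
    have hY1 : (σ+1)^(-α-1) = Y/(σ+1) := by
      rw [hYdef, ← Real.rpow_sub_one (by positivity : σ+1 ≠ 0) (-α)]
    rw [← hY1]
    exact h
  -- final polynomial step
  have hXY := XY_bound hα0.le hσ1 hσ2
  rw [← hXdef, ← hYdef] at hXY
  have hP : (1-α)*(2-α)*(8*(σ+1)+α) < 4*(σ+1)*(4-3*α*σ-α^2)*(1+0.6931*α) := by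
    have hb1 : (0:ℝ) ≤ 3-3*α+0.6931*(4-3*α-α^2) := by
      nlinarith [mul_nonneg (sub_nonneg.2 hα.le) (by linarith : (0:ℝ) ≤ 4+α)]
    have hT1 : (0:ℝ) ≤ 12*α*(1-σ)*(σ+1)*(1+0.6931*α) := by
      apply mul_nonneg
      apply mul_nonneg
      apply mul_nonneg
      · nlinarith
      all_goals linarith
    have hT2 : 6*α*(3-3*α+0.6931*(4-3*α-α^2))
        ≤ (σ+1)*(4*α*(3-3*α+0.6931*(4-3*α-α^2))) := by
      nlinarith [mul_nonneg (mul_nonneg (by linarith : (0:ℝ) ≤ σ+1-3/2)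
        (by linarith : (0:ℝ) ≤ 4*α)) hb1]
    have hT23 : α*(1-α)*(2-α) < 6*α*(3-3*α+0.6931*(4-3*α-α^2)) := by
      nlinarith [mul_pos (mul_pos hα0 (sub_pos.2 hα))
        (by linarith : (0:ℝ) < 16+α+6*0.6931*(4+α))]
    have hide : 4*(σ+1)*(4-3*α*σ-α^2)*(1+0.6931*α) - (1-α)*(2-α)*(8*(σ+1)+α)
        = 12*α*(1-σ)*(σ+1)*(1+0.6931*α)
          + (σ+1)*(4*α*(3-3*α+0.6931*(4-3*α-α^2))) - α*(1-α)*(2-α) := by ring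
    linarith
  have hbr : (0:ℝ) ≤ 4-3*α*σ-α^2 := by
    nlinarith [mul_nonneg (sub_nonneg.2 hα.le) (by linarith : (0:ℝ) ≤ 4+α),
      mul_nonneg hα0.le (sub_nonneg.2 hσ2)]
  have hcoef : (0:ℝ) ≤ 4*(σ+1)*(4-3*α*σ-α^2) :=
    mul_nonneg (mul_nonneg (by norm_num) (by linarith)) hbr
  have hN : 0 < 4*(σ+1)*(4-3*α*σ-α^2)*X - (1-α)*(2-α)*(8*(σ+1)+α)*Y := by
    have h1 : 4*(σ+1)*(4-3*α*σ-α^2)*((1+0.6931*α)*Y) ≤ 4*(σ+1)*(4-3*α*σ-α^2)*X :=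
      mul_le_mul_of_nonneg_left hXY hcoef
    have h2 : (1-α)*(2-α)*(8*(σ+1)+α)*Y < 4*(σ+1)*(4-3*α*σ-α^2)*(1+0.6931*α)*Y :=
      mul_lt_mul_of_pos_right hP hYpos
    nlinarith
  have hkey : X*(2*σ-2+α)/(2-α) <
      X*σ - ((1-α)*X + 2*(1-α)*(Y-X)/3) - α*(1-α)*(Y/(σ+1))/12 := by
    rw [← sub_pos]
    have hform : X*σ - ((1-α)*X + 2*(1-α)*(Y-X)/3) - α*(1-α)*(Y/(σ+1))/12
        - X*(2*σ-2+α)/(2-α)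
        = (4*(σ+1)*(4-3*α*σ-α^2)*X - (1-α)*(2-α)*(8*(σ+1)+α)*Y) / (12*(2-α)*(σ+1)) := by
      have hd1 : (2:ℝ)-α ≠ 0 := by linarith
      have hd2 : (σ:ℝ)+1 ≠ 0 := by linarith
      field_simp
      ring
    rw [hform]
    have h2a : (0:ℝ) < 2-α := by linarith
    have hs1 : (0:ℝ) < σ+1 := by linarith
    exact div_pos hN (mul_pos (mul_pos (by norm_num) h2a) hs1)
  have hlhs : (2/σ) * (σ^(1-α) * (σ - (1 - α/2)) / (2-α)) = X*(2*σ-2+α)/(2-α) := by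
    have hd1 : (2:ℝ)-α ≠ 0 := by linarith
    rw [hX]
    field_simp
    ring
  rw [hlhs, hstep1]
  linarith [hkey, hstep2, hstep3, hX.le, hX.ge]

end s7


section s8
variable {α : ℝ}

/-! ### values at `α = 1` and `α = 0` -/

lemma aR_one (x : ℝ) : aR 1 x = 0 := by
  unfold aR; norm_num

lemma bR_one (x : ℝ) : bR 1 x = 0 := by
  unfold bR; norm_num

lemma aR_zero (x : ℝ) : aR 0 x = 1 := by
  unfold aR; norm_num

lemma bR_zero (x : ℝ) : bR 0 x = 0 := by
  unfold bR
  norm_num [Real.rpow_two]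
  ring

/-! ### wrappers valid for all `α ∈ [0,1]` -/

lemma bR_nonneg' (hα0 : 0 ≤ α) (hα1 : α ≤ 1) {x : ℝ} (hx : 0 < x) : 0 ≤ bR α x := by
  rcases eq_or_lt_of_le hα1 with rfl | h
  · rw [bR_one]
  · exact bR_nonneg hα0 h hx

lemma cM_anti' (hα0 : 0 ≤ α) (hα1 : α ≤ 1) {x : ℝ} (hx : 0 < x) : cM α (x+1) ≤ cM α x := by
  rcases eq_or_lt_of_le hα1 with rfl | h
  · unfold cM; rw [aR_one, aR_one, bR_one, bR_one, bR_one]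
  · exact cM_anti hα0 h hx

lemma last_ge' (hα0 : 0 ≤ α) (hα1 : α ≤ 1) {x : ℝ} (hx : 0 < x) :
    (1-α)/2 * (x+1) ^ (-α) ≤ aR α x - bR α x := by
  rcases eq_or_lt_of_le hα1 with rfl | h
  · rw [aR_one, bR_one]; norm_num
  · exact (last_ge hα0 h hx).le

lemma head_le (hα0 : 0 ≤ α) (hα1 : α ≤ 1) {σ : ℝ} (hσ1 : 1/2 ≤ σ) (hσ2 : σ ≤ 1) :
    (2/σ) * (σ^(1-α) * (σ - (1 - α/2)) / (2-α)) ≤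
      σ^(1-α) + 2*bR α σ - aR α σ - bR α (σ+1) := by
  have hσp : (0:ℝ) < σ := by linarith
  rcases eq_or_lt_of_le hα1 with rfl | h
  · rw [aR_one, bR_one, bR_one]
    norm_num
    rw [div_mul_eq_mul_div, div_le_one hσp]
    nlinarith
  rcases eq_or_lt_of_le hα0 with rfl | h0
  · rw [aR_zero, bR_zero, bR_zero]
    norm_num
    rw [mul_comm, mul_div_assoc, div_self hσp.ne', mul_one]
  · exact (head_strict h0 h hσ1 hσ2).le

/-- `σ^(1-α) ≥ (1-α)/2 σ^(-α)` (the `n = 1` lower bound) -/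
lemma first_le (hα0 : 0 ≤ α) (hα1 : α ≤ 1) {σ : ℝ} (hσ1 : 1/2 ≤ σ) :
    (1-α)/2 * σ ^ (-α) ≤ σ ^ (1-α) := by
  have hσp : (0:ℝ) < σ := by linarith
  have hX : σ^(1-α) = σ^(-α) * σ := by
    rw [show (1:ℝ)-α = -α+1 from by ring, Real.rpow_add_one hσp.ne']
  rw [hX, mul_comm (σ^(-α)) σ]
  apply mul_le_mul_of_nonneg_right _ (rpow_pos_of_pos hσp _).le
  linarith

lemma first_lt (hα0 : 0 < α) (hα1 : α ≤ 1) {σ : ℝ} (hσ1 : 1/2 ≤ σ) :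
    (1-α)/2 * σ ^ (-α) < σ ^ (1-α) := by
  have hσp : (0:ℝ) < σ := by linarith
  have hX : σ^(1-α) = σ^(-α) * σ := by
    rw [show (1:ℝ)-α = -α+1 from by ring, Real.rpow_add_one hσp.ne']
  rw [hX, mul_comm (σ^(-α)) σ]
  apply mul_lt_mul_of_pos_right _ (rpow_pos_of_pos hσp _)
  linarith

end s8


/-! ### bridges -/

lemma bb_eq (σ α : ℝ) (l : ℕ) : bb σ α l = bR α ((l:ℝ) - 1 + σ) := by
  unfold bb bR
  have h1 : (l:ℝ) - 1 + σ + 1 = (l:ℝ) + σ := by ring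
  rw [h1]

lemma aa_eq (σ α : ℝ) (l : ℕ) (hl : 1 ≤ l) : aa σ α l = aR α ((l:ℝ) - 1 + σ) := by
  cases l with
  | zero => omega
  | succ k =>
    show ((k:ℝ) + 1 + σ) ^ (1-α) - ((k:ℝ) + σ) ^ (1-α) = _
    unfold aR
    have h1 : ((k+1:ℕ):ℝ) - 1 + σ = (k:ℝ) + σ := by push_cast; ring
    rw [h1]
    have h2 : (k:ℝ) + σ + 1 = (k:ℝ) + 1 + σ := by ring
    rw [h2]

lemma cc_head (σ α : ℝ) {n : ℕ} (hn : 2 ≤ n) : cc σ α n 0 = σ^(1-α) + bR α σ := by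
  unfold cc
  rw [if_neg (by omega), if_pos rfl]
  have h1 : bb σ α 1 = bR α σ := by rw [bb_eq σ α 1]; norm_num
  rw [h1]
  simp [aa]

lemma cc_mid (σ α : ℝ) {n k : ℕ} (hk1 : 1 ≤ k) (hk : k < n - 1) :
    cc σ α n k = cM α ((k:ℝ) - 1 + σ) := by
  unfold cc cM
  rw [if_neg (by omega), if_neg (by omega), if_neg (by omega)]
  rw [aa_eq σ α k hk1, bb_eq σ α (k+1), bb_eq σ α k]
  have h1 : ((k+1:ℕ):ℝ) - 1 + σ = ((k:ℝ) - 1 + σ) + 1 := by push_cast; ring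
  rw [h1]

lemma cc_last (σ α : ℝ) {n : ℕ} (hn : 2 ≤ n) :
    cc σ α n (n-1) = aR α (((n-1:ℕ):ℝ) - 1 + σ) - bR α (((n-1:ℕ):ℝ) - 1 + σ) := by
  unfold cc
  rw [if_neg (by omega), if_neg (by omega), if_pos rfl]
  rw [aa_eq σ α (n-1) (by omega), bb_eq σ α (n-1)]


/-- Lemma 2.6: the coefficients `ĉ_k^{(n)}` are strictly decreasing in `k`, and
`ĉ_{n−1}^{(n)} > Σ_r λ_r (τ^{−α_r}/Γ(2−α_r)) ((1−α_r)/2) (n−1+σ)^{−α_r}`. -/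
theorem chat_strict_anti_and_lower_bound
    (m : ℕ) (hm : 1 ≤ m) (lam alf : ℕ → ℝ)
    (hlam : ∀ r ≤ m, 0 < lam r)
    (hmono : ∀ r, r < m → alf r < alf (r + 1))
    (h0 : 0 ≤ alf 0) (h1 : alf m ≤ 1)
    (hmid : ∃ r ≤ m, 0 < alf r ∧ alf r < 1)
    (τ : ℝ) (hτ : 0 < τ) (σ : ℝ) (hσ1 : 1 / 2 ≤ σ) (hσ2 : σ ≤ 1)
    (hFσ : Ffun m lam alf τ σ = 0)
    (n : ℕ) (hn : 1 ≤ n) :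
    (∀ k : ℕ, k + 1 ≤ n - 1 →
        chat m lam alf τ σ n (k + 1) < chat m lam alf τ σ n k) ∧
    chat m lam alf τ σ n (n - 1) >
      ∑ r ∈ Finset.range (m + 1),
        lam r * (τ ^ (-alf r) / Real.Gamma (2 - alf r)) * ((1 - alf r) / 2) *
          ((n : ℝ) - 1 + σ) ^ (-alf r) := by
  have hσp : (0:ℝ) < σ := by linarith
  -- monotonicity of alf
  have hmono' : ∀ i j, i ≤ j → j ≤ m → alf i ≤ alf j := by
    intro i j hij hjm
    induction hij with
    | refl => exact le_rfl
    | @step k hk ih =>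
      exact le_trans (ih (by omega)) (hmono k (by omega)).le
  have hb0 : ∀ r, r ≤ m → 0 ≤ alf r := fun r hr =>
    le_trans h0 (hmono' 0 r (Nat.zero_le r) hr)
  have hb1 : ∀ r, r ≤ m → alf r ≤ 1 := fun r hr =>
    le_trans (hmono' r m hr le_rfl) h1
  set μ : ℕ → ℝ := fun r => lam r * (τ ^ (-alf r) / Real.Gamma (2 - alf r)) with hμ
  have hμpos : ∀ r, r ≤ m → 0 < μ r := fun r hr =>
    mul_pos (hlam r hr) (div_pos (rpow_pos_of_pos hτ _)
      (Real.Gamma_pos_of_pos (by linarith [hb1 r hr])))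
  -- the zero-sum from F(σ) = 0
  have hE : ∑ r ∈ Finset.range (m+1),
      μ r * (σ^(1-alf r) * (σ - (1 - alf r/2)) / (2-alf r)) = 0 := by
    have hterm : ∀ r ∈ Finset.range (m+1),
        lam r / Real.Gamma (3 - alf r) * σ ^ (1 - alf r) * (σ - (1 - alf r / 2))
          * τ ^ (2 - alf r)
        = (τ^(2:ℝ)) * (μ r * (σ^(1-alf r) * (σ - (1 - alf r/2)) / (2-alf r))) := by
      intro r hr
      have hrm : r ≤ m := Nat.lt_succ_iff.mp (Finset.mem_range.mp hr)
      have ha1 := hb1 r hrm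
      have h2pos : (0:ℝ) < 2 - alf r := by linarith
      have hG : Real.Gamma (3 - alf r) = (2 - alf r) * Real.Gamma (2 - alf r) := by
        rw [show (3:ℝ) - alf r = (2 - alf r) + 1 from by ring, Real.Gamma_add_one h2pos.ne']
      have hτ2 : τ ^ (2 - alf r) = τ^(2:ℝ) * τ^(-alf r) := by
        rw [← Real.rpow_add hτ]; ring_nf
      have hGpos : 0 < Real.Gamma (2 - alf r) := Real.Gamma_pos_of_pos h2pos
      rw [hG, hτ2, hμ]
      field_simp
    have hsum : Ffun m lam alf τ σ = (τ^(2:ℝ)) * ∑ r ∈ Finset.range (m+1),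
        μ r * (σ^(1-alf r) * (σ - (1 - alf r/2)) / (2-alf r)) := by
      rw [Ffun, Finset.mul_sum]
      exact Finset.sum_congr rfl hterm
    rw [hsum] at hFσ
    have ht2 : (0:ℝ) < τ^(2:ℝ) := rpow_pos_of_pos hτ _
    exact (mul_eq_zero.mp hFσ).resolve_left ht2.ne'
  obtain ⟨r0, hr0m, hr0a, hr0b⟩ := hmid
  have hr0mem : r0 ∈ Finset.range (m+1) := Finset.mem_range.mpr (by omega)
  constructor
  · -- Part 1 : strict monotonicity
    intro k hk
    have hn2 : 2 ≤ n := by omega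
    rw [← sub_pos]
    have hrepr : chat m lam alf τ σ n k - chat m lam alf τ σ n (k+1)
        = ∑ r ∈ Finset.range (m+1), μ r * (cc σ (alf r) n k - cc σ (alf r) n (k+1)) := by
      unfold chat
      rw [← Finset.sum_sub_distrib]
      exact Finset.sum_congr rfl fun r _ => by simp only [hμ]; ring
    rw [hrepr]
    rcases Nat.eq_zero_or_pos k with rfl | hkpos
    · -- k = 0 : use the head inequality through F(σ) = 0
      have hccd : ∀ a : ℝ, 0 ≤ a → a ≤ 1 →
          (2/σ) * (σ^(1-a) * (σ - (1 - a/2)) / (2-a)) ≤ cc σ a n 0 - cc σ a n 1 := by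
        intro a ha0 ha1
        rw [cc_head σ a hn2]
        have hh := head_le ha0 ha1 hσ1 hσ2
        rcases eq_or_lt_of_le hn2 with h2 | h3
        · have h21 : (1:ℕ) = n - 1 := by omega
          rw [show cc σ a n 1 = cc σ a n (n-1) from by rw [← h21], cc_last σ a hn2]
          have hx : ((n-1:ℕ):ℝ) - 1 + σ = σ := by
            have hh1 : (n-1:ℕ) = 1 := by omega
            rw [hh1]; norm_num
          rw [hx]
          have hbb := bR_nonneg' ha0 ha1 (show (0:ℝ) < σ+1 by linarith)
          linarith
        · rw [cc_mid σ a le_rfl (by omega)]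
          have hx : ((1:ℕ):ℝ) - 1 + σ = σ := by norm_num
          rw [hx]
          unfold cM
          linarith
      have hccds : (2/σ) * (σ^(1-alf r0) * (σ - (1 - alf r0/2)) / (2-alf r0))
          < cc σ (alf r0) n 0 - cc σ (alf r0) n 1 := by
        set a := alf r0 with ha
        rw [cc_head σ a hn2]
        have hh := head_strict hr0a hr0b hσ1 hσ2
        rcases eq_or_lt_of_le hn2 with h2 | h3
        · have h21 : (1:ℕ) = n - 1 := by omega
          rw [show cc σ a n 1 = cc σ a n (n-1) from by rw [← h21], cc_last σ a hn2]
          have hx : ((n-1:ℕ):ℝ) - 1 + σ = σ := by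
            have hh1 : (n-1:ℕ) = 1 := by omega
            rw [hh1]; norm_num
          rw [hx]
          have hbb := bR_nonneg' hr0a.le hr0b.le (show (0:ℝ) < σ+1 by linarith)
          linarith
        · rw [cc_mid σ a le_rfl (by omega)]
          have hx : ((1:ℕ):ℝ) - 1 + σ = σ := by norm_num
          rw [hx]
          unfold cM
          linarith
      have hsplit : ∀ r ∈ Finset.range (m+1),
          μ r * (cc σ (alf r) n 0 - cc σ (alf r) n 1)
          = μ r * (cc σ (alf r) n 0 - cc σ (alf r) n 1
              - (2/σ) * (σ^(1-alf r) * (σ - (1 - alf r/2)) / (2-alf r)))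
            + (2/σ) * (μ r * (σ^(1-alf r) * (σ - (1 - alf r/2)) / (2-alf r))) :=
        fun r _ => by ring
      rw [Finset.sum_congr rfl hsplit, Finset.sum_add_distrib, ← Finset.mul_sum, hE,
        mul_zero, add_zero]
      apply Finset.sum_pos'
      · intro r hr
        have hrm : r ≤ m := Nat.lt_succ_iff.mp (Finset.mem_range.mp hr)
        exact mul_nonneg (hμpos r hrm).le
          (by linarith [hccd (alf r) (hb0 r hrm) (hb1 r hrm)])
      · exact ⟨r0, hr0mem, mul_pos (hμpos r0 hr0m) (by linarith [hccds])⟩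
    · -- k ≥ 1 : termwise monotonicity
      have hccd : ∀ a : ℝ, 0 ≤ a → a ≤ 1 →
          0 ≤ cc σ a n k - cc σ a n (k+1) := by
        intro a ha0 ha1
        have hxpos : (0:ℝ) < (k:ℝ) - 1 + σ := by
          have hcast : (1:ℝ) ≤ (k:ℝ) := by exact_mod_cast hkpos
          linarith
        rw [cc_mid σ a hkpos (by omega)]
        have hc1 : ((k+1:ℕ):ℝ) - 1 + σ = ((k:ℝ) - 1 + σ) + 1 := by push_cast; ring
        rcases eq_or_lt_of_le hk with h2 | h3
        · rw [h2, cc_last σ a (by omega)]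
          have hc2 : ((n-1:ℕ):ℝ) - 1 + σ = ((k:ℝ) - 1 + σ) + 1 := by
            rw [show ((n-1:ℕ):ℝ) = ((k+1:ℕ):ℝ) from by rw [h2], ← hc1]
          rw [hc2]
          have hAB : aR a (((k:ℝ) - 1 + σ) + 1) - bR a (((k:ℝ) - 1 + σ) + 1)
              = cM a (((k:ℝ) - 1 + σ) + 1) - bR a ((((k:ℝ) - 1 + σ) + 1) + 1) := by
            unfold cM; ring
          rw [hAB]
          have hcm := cM_anti' ha0 ha1 hxpos
          have hbb := bR_nonneg' ha0 ha1 (show (0:ℝ) < (((k:ℝ)-1+σ)+1)+1 by linarith)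
          linarith
        · rw [cc_mid σ a (by omega) (by omega), hc1]
          linarith [cM_anti' ha0 ha1 hxpos]
      have hccds : 0 < cc σ (alf r0) n k - cc σ (alf r0) n (k+1) := by
        set a := alf r0 with ha
        have hxpos : (0:ℝ) < (k:ℝ) - 1 + σ := by
          have hcast : (1:ℝ) ≤ (k:ℝ) := by exact_mod_cast hkpos
          linarith
        rw [cc_mid σ a hkpos (by omega)]
        have hc1 : ((k+1:ℕ):ℝ) - 1 + σ = ((k:ℝ) - 1 + σ) + 1 := by push_cast; ring
        rcases eq_or_lt_of_le hk with h2 | h3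
        · rw [h2, cc_last σ a (by omega)]
          have hc2 : ((n-1:ℕ):ℝ) - 1 + σ = ((k:ℝ) - 1 + σ) + 1 := by
            rw [show ((n-1:ℕ):ℝ) = ((k+1:ℕ):ℝ) from by rw [h2], ← hc1]
          rw [hc2]
          have hAB : aR a (((k:ℝ) - 1 + σ) + 1) - bR a (((k:ℝ) - 1 + σ) + 1)
              = cM a (((k:ℝ) - 1 + σ) + 1) - bR a ((((k:ℝ) - 1 + σ) + 1) + 1) := by
            unfold cM; ring
          rw [hAB]
          have hcm := cM_anti_strict hr0a hr0b hxpos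
          have hbb := bR_nonneg' hr0a.le hr0b.le
            (show (0:ℝ) < (((k:ℝ)-1+σ)+1)+1 by linarith)
          linarith
        · rw [cc_mid σ a (by omega) (by omega), hc1]
          linarith [cM_anti_strict hr0a hr0b hxpos]
      apply Finset.sum_pos'
      · intro r hr
        have hrm : r ≤ m := Nat.lt_succ_iff.mp (Finset.mem_range.mp hr)
        exact mul_nonneg (hμpos r hrm).le (hccd (alf r) (hb0 r hrm) (hb1 r hrm))
      · exact ⟨r0, hr0mem, mul_pos (hμpos r0 hr0m) hccds⟩
  · -- Part 2 : lower bound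
    rw [gt_iff_lt, ← sub_pos]
    have hrepr2 : chat m lam alf τ σ n (n-1)
        - (∑ r ∈ Finset.range (m + 1),
            lam r * (τ ^ (-alf r) / Real.Gamma (2 - alf r)) * ((1 - alf r) / 2) *
              ((n : ℝ) - 1 + σ) ^ (-alf r))
        = ∑ r ∈ Finset.range (m+1),
            μ r * (cc σ (alf r) n (n-1)
              - (1 - alf r)/2 * ((n:ℝ) - 1 + σ) ^ (-alf r)) := by
      unfold chat
      rw [← Finset.sum_sub_distrib]
      exact Finset.sum_congr rfl fun r _ => by simp only [hμ]; ring
    rw [hrepr2]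
    rcases eq_or_lt_of_le hn with hn1 | hn2
    · -- n = 1
      have hn1' : n = 1 := hn1.symm
      subst hn1'
      have hcc1 : ∀ a : ℝ, cc σ a 1 0 = σ ^ (1-a) := by
        intro a
        unfold cc
        rw [if_pos rfl]
        simp [aa]
      have hσc : ((1:ℕ):ℝ) - 1 + σ = σ := by norm_num
      apply Finset.sum_pos'
      · intro r hr
        have hrm : r ≤ m := Nat.lt_succ_iff.mp (Finset.mem_range.mp hr)
        apply mul_nonneg (hμpos r hrm).le
        rw [show (1:ℕ) - 1 = 0 from rfl, hcc1, hσc]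
        linarith [first_le (hb0 r hrm) (hb1 r hrm) hσ1]
      · refine ⟨r0, hr0mem, mul_pos (hμpos r0 hr0m) ?_⟩
        rw [show (1:ℕ) - 1 = 0 from rfl, hcc1, hσc]
        linarith [first_lt hr0a hr0b.le hσ1]
    · -- n ≥ 2
      have hn2' : 2 ≤ n := hn2
      have hxge : (1:ℝ) ≤ ((n-1:ℕ):ℝ) := by
        have : 1 ≤ n - 1 := by omega
        exact_mod_cast this
      have hxpos : (0:ℝ) < ((n-1:ℕ):ℝ) - 1 + σ := by linarith
      have hceq : ((n:ℝ) - 1 + σ) = (((n-1:ℕ):ℝ) - 1 + σ) + 1 := by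
        have : ((n-1:ℕ):ℝ) = (n:ℝ) - 1 := by
          push_cast [Nat.cast_sub hn]
          ring
        rw [this]; ring
      apply Finset.sum_pos'
      · intro r hr
        have hrm : r ≤ m := Nat.lt_succ_iff.mp (Finset.mem_range.mp hr)
        apply mul_nonneg (hμpos r hrm).le
        rw [cc_last σ (alf r) hn2', hceq]
        linarith [last_ge' (hb0 r hrm) (hb1 r hrm) hxpos]
      · refine ⟨r0, hr0mem, mul_pos (hμpos r0 hr0m) ?_⟩
        rw [cc_last σ (alf r0) hn2', hceq]
        linarith [last_ge hr0a.le hr0b hxpos]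
end

section
/- Assume the coefficient setup, with at least one α_r lying in the open interval (0,1). Let T > 0 and let n ≥ 1 be an integer with nτ ≤ T. Then ĉ_{n−1}^{(n)} ≥ (1/2) Σ_{r=0}^{m} λ_r / (T^{α_r} Γ(1−α_r)), where a summand with α_r = 1 is interpreted as 0 (consistently with Mathlib's conventions Γ(0) = 0 and x/0 = 0). -/
/-- Quadratic Bernoulli: for `1 ≤ p ≤ 2` and `-1 < t ≤ 0`,
`1 + p t + p(p-1)/2 t² ≤ (1+t)^p`. -/
lemma bern2 {p : ℝ} (hp1 : 1 ≤ p) (hp2 : p ≤ 2) {t : ℝ} (ht : -1 < t) (ht0 : t ≤ 0) :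
    1 + p * t + p * (p - 1) / 2 * t ^ 2 ≤ (1 + t) ^ p := by
  set g : ℝ → ℝ := fun s => (1 + s) ^ p - (1 + p * s + p * (p - 1) / 2 * s ^ 2) with hg
  have hderiv : ∀ s : ℝ,
      HasDerivAt g (p * (1 + s) ^ (p - 1) - (p + p * (p - 1) * s)) s := by
    intro s
    have h1 : HasDerivAt (fun s : ℝ => (1 + s) ^ p) (1 * p * (1 + s) ^ (p - 1)) s :=
      HasDerivAt.rpow_const ((hasDerivAt_id s).const_add 1) (Or.inr hp1)
    have h2 : HasDerivAt (fun s : ℝ => 1 + p * s + p * (p - 1) / 2 * s ^ 2)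
        (p + p * (p - 1) / 2 * (2 * s ^ 1)) s := by
      have hb : HasDerivAt (fun s : ℝ => s ^ 2) ((2 : ℕ) * s ^ 1) s := hasDerivAt_pow 2 s
      have := (((hasDerivAt_id s).const_mul p).const_add 1).add (hb.const_mul (p * (p - 1) / 2))
      refine this.congr_deriv ?_
      push_cast
      ring
    have := h1.sub h2
    refine this.congr_deriv ?_
    ring
  have hanti : AntitoneOn g (Set.Icc t 0) := by
    apply antitoneOn_of_deriv_nonpos (convex_Icc t 0)
    · exact fun s _ => (hderiv s).continuousAt.continuousWithinAt
    · exact fun s _ => (hderiv s).differentiableAt.differentiableWithinAt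
    · intro x hx
      rw [interior_Icc] at hx
      rw [(hderiv x).deriv]
      have hx1 : -1 ≤ x := by linarith [hx.1]
      have hB : (1 + x) ^ (p - 1) ≤ 1 + (p - 1) * x :=
        rpow_one_add_le_one_add_mul_self hx1 (by linarith) (by linarith)
      have := mul_le_mul_of_nonneg_left hB (by linarith : (0:ℝ) ≤ p)
      nlinarith [this]
  have h0mem : (0:ℝ) ∈ Set.Icc t 0 := ⟨ht0, le_rfl⟩
  have htmem : t ∈ Set.Icc t 0 := ⟨le_rfl, ht0⟩
  have := hanti htmem h0mem ht0
  have hg0 : g 0 = 0 := by simp [hg]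
  rw [hg0] at this
  simp only [hg] at this
  linarith

/-- Key algebraic inequality: for `0 ≤ β ≤ 1` and `x > 0`,
`(x+1)^{β+1} - x^{β+1} ≤ (β+1)(x+1)^β - β(β+1)/2 (x+1)^{β-1}`. -/
lemma star {β x : ℝ} (hβ0 : 0 ≤ β) (hβ1 : β ≤ 1) (hx : 0 < x) :
    (x+1) ^ (β+1) - x ^ (β+1) ≤ (β+1) * (x+1) ^ β - β * (β+1) / 2 * (x+1) ^ (β-1) := by
  have hx1 : (0:ℝ) < x + 1 := by linarith
  set t : ℝ := -1 / (x + 1) with htdef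
  have hxt : 1 / (x + 1) < 1 := by rw [div_lt_one hx1]; linarith
  have hxt0 : 0 < 1 / (x + 1) := by positivity
  have ht : -1 < t := by rw [htdef]; rw [neg_div]; linarith
  have ht0 : t ≤ 0 := by rw [htdef, neg_div]; linarith
  have h1t : 1 + t = x / (x + 1) := by rw [htdef]; field_simp; ring
  have hb := bern2 (p := β + 1) (by linarith) (by linarith) ht ht0
  rw [h1t, Real.div_rpow hx.le hx1.le] at hb
  have hpow : (0:ℝ) < (x+1) ^ (β+1) := Real.rpow_pos_of_pos hx1 _
  have hb2 : (1 + (β+1) * t + (β+1) * ((β+1) - 1) / 2 * t ^ 2) * (x+1) ^ (β+1) ≤ x ^ (β+1) :=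
    (le_div_iff₀ hpow).mp hb
  have e1 : (x+1) ^ (β+1) = (x+1) ^ β * (x+1) := Real.rpow_add_one hx1.ne' β
  have e2 : (x+1) ^ β = (x+1) ^ (β-1) * (x+1) := by
    rw [← Real.rpow_add_one hx1.ne']; congr 1; ring
  have hne : (x+1) ≠ 0 := hx1.ne'
  have expand : (1 + (β+1) * t + (β+1) * ((β+1) - 1) / 2 * t ^ 2)
        * ((x+1) ^ (β-1) * (x+1) * (x+1))
      = (x+1) ^ (β-1) * (x+1) * (x+1) - (β+1) * ((x+1) ^ (β-1) * (x+1))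
        + (β+1) * β / 2 * (x+1) ^ (β-1) := by
    rw [htdef]
    field_simp
    ring
  rw [e1, e2] at hb2 ⊢
  rw [expand] at hb2
  linarith

/-- Combination of `star` with monotonicity: lower bound on the last-coefficient expression. -/
lemma key {β x : ℝ} (hβ0 : 0 ≤ β) (hβ1 : β ≤ 1) (hx : 0 < x) :
    β / 2 * (x+1) ^ (β-1) ≤
      ((x+1) ^ β - x ^ β) -
        (((x+1) ^ (β+1) - x ^ (β+1)) / (β+1) - ((x+1) ^ β + x ^ β) / 2) := by
  have hβp : (0:ℝ) < β + 1 := by linarith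
  have hdiv : ((x+1) ^ (β+1) - x ^ (β+1)) / (β+1) ≤ (x+1) ^ β - β / 2 * (x+1) ^ (β-1) := by
    rw [div_le_iff₀ hβp]
    calc (x+1) ^ (β+1) - x ^ (β+1)
        ≤ (β+1) * (x+1) ^ β - β * (β+1) / 2 * (x+1) ^ (β-1) := star hβ0 hβ1 hx
      _ = ((x+1) ^ β - β / 2 * (x+1) ^ (β-1)) * (β+1) := by ring
  have hmono2 : x ^ β ≤ (x+1) ^ β := Real.rpow_le_rpow hx.le (by linarith) hβ0
  linarith

/-- Alikhanov's bound on the last coefficient. -/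
lemma cc_last_ge {σ α : ℝ} (hσ1 : 1 / 2 ≤ σ) (hσ2 : σ ≤ 1) (hα0 : 0 ≤ α) (hα1 : α ≤ 1)
    {n : ℕ} (hn : 1 ≤ n) :
    (1 - α) / 2 * ((n : ℝ) - 1 + σ) ^ (-α) ≤ cc σ α n (n - 1) := by
  have hσ0 : (0:ℝ) < σ := lt_of_lt_of_le one_half_pos hσ1
  match n, hn with
  | 1, _ =>
    have hc : cc σ α 1 0 = σ ^ (1 - α) := by simp [cc, aa]
    have he : ((1:ℕ) : ℝ) - 1 + σ = σ := by norm_num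
    rw [Nat.sub_self, hc, he]
    have e : σ ^ (1 - α) = σ * σ ^ (-α) := by
      rw [show (1 - α) = 1 + (-α) by ring, Real.rpow_add hσ0, Real.rpow_one]
    rw [e]
    have hp : (0:ℝ) < σ ^ (-α) := Real.rpow_pos_of_pos hσ0 _
    apply mul_le_mul_of_nonneg_right (by linarith) hp.le
  | (k + 2), _ =>
    have hx : (0:ℝ) < (k : ℝ) + σ := by
      have : (0:ℝ) ≤ (k : ℝ) := Nat.cast_nonneg k
      linarith
    have hc : cc σ α (k + 2) (k + 2 - 1) = aa σ α (k + 1) - bb σ α (k + 1) := by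
      rw [cc]
      rw [if_neg (by omega), if_neg (by omega), if_pos rfl]
      norm_num
    rw [hc]
    have haa : aa σ α (k + 1) = ((k:ℝ) + σ + 1) ^ (1 - α) - ((k:ℝ) + σ) ^ (1 - α) := by
      show ((k : ℝ) + 1 + σ) ^ (1 - α) - ((k : ℝ) + σ) ^ (1 - α) = _
      ring_nf
    have hbb : bb σ α (k + 1) =
        ((((k:ℝ) + σ + 1) ^ (2 - α) - ((k:ℝ) + σ) ^ (2 - α)) / (2 - α)
          - (((k:ℝ) + σ + 1) ^ (1 - α) + ((k:ℝ) + σ) ^ (1 - α)) / 2) := by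
      rw [bb]
      push_cast
      rw [show (k:ℝ) + 1 + σ = (k:ℝ) + σ + 1 by ring, show (k:ℝ) + 1 - 1 + σ = (k:ℝ) + σ by ring]
    have hcast : ((k + 2 : ℕ) : ℝ) - 1 + σ = ((k:ℝ) + σ) + 1 := by push_cast; ring
    rw [haa, hbb, hcast]
    have hk := key (β := 1 - α) (x := (k:ℝ) + σ) (by linarith) (by linarith) hx
    rw [show (1 - α) + 1 = 2 - α by ring, show (1 - α) - 1 = -α by ring] at hk
    linarith

/-- Inequality (2.28): if `nτ ≤ T`, then
`ĉ_{n−1}^{(n)} ≥ (1/2) Σ_r λ_r / (T^{α_r} Γ(1−α_r))`. -/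
theorem chat_last_ge_half_S
    (m : ℕ) (hm : 1 ≤ m) (lam alf : ℕ → ℝ)
    (hlam : ∀ r ≤ m, 0 < lam r)
    (hmono : ∀ r, r < m → alf r < alf (r + 1))
    (h0 : 0 ≤ alf 0) (h1 : alf m ≤ 1)
    (hmid : ∃ r ≤ m, 0 < alf r ∧ alf r < 1)
    (τ : ℝ) (hτ : 0 < τ) (σ : ℝ) (hσ1 : 1 / 2 ≤ σ) (hσ2 : σ ≤ 1)
    (hFσ : Ffun m lam alf τ σ = 0)
    (T : ℝ) (hT : 0 < T) (n : ℕ) (hn : 1 ≤ n) (hnT : (n : ℝ) * τ ≤ T) :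
    chat m lam alf τ σ n (n - 1) ≥
      1 / 2 * ∑ r ∈ Finset.range (m + 1),
        lam r / (T ^ alf r * Real.Gamma (1 - alf r)) := by
  have hσ0 : (0:ℝ) < σ := lt_of_lt_of_le one_half_pos hσ1
  have mono : ∀ i j : ℕ, i ≤ j → j ≤ m → alf i ≤ alf j := by
    intro i j hij hjm
    induction j with
    | zero =>
      have : i = 0 := by omega
      subst this; exact le_rfl
    | succ p ih =>
      rcases Nat.lt_succ_iff_lt_or_eq.mp (Nat.lt_succ_of_le hij) with h | h
      · exact (ih (Nat.lt_succ_iff.mp h) (by omega)).trans (hmono p (by omega)).le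
      · rw [h]
  rw [ge_iff_le, Finset.mul_sum]
  unfold chat
  apply Finset.sum_le_sum
  intro r hr
  have hrm : r ≤ m := by
    have := Finset.mem_range.mp hr; omega
  set α := alf r with hαdef
  have hα0 : 0 ≤ α := le_trans h0 (mono 0 r (Nat.zero_le r) hrm)
  have hα1 : α ≤ 1 := le_trans (mono r m hrm le_rfl) h1
  have hlamr : 0 < lam r := hlam r hrm
  have hy : (0:ℝ) < (n:ℝ) - 1 + σ := by
    have : (1:ℝ) ≤ (n:ℝ) := by exact_mod_cast hn
    linarith
  have hccge := cc_last_ge (α := α) hσ1 hσ2 hα0 hα1 hn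
  have hτp : (0:ℝ) < τ ^ (-α) := Real.rpow_pos_of_pos hτ _
  have hΓ2p : 0 < Real.Gamma (2 - α) := Real.Gamma_pos_of_pos (by linarith)
  rcases eq_or_lt_of_le hα1 with h1eq | hlt
  · have hΓ0 : Real.Gamma (1 - α) = 0 := by rw [h1eq]; simp [Real.Gamma_zero]
    rw [hΓ0, mul_zero, div_zero, mul_zero]
    have hccnn : 0 ≤ cc σ α n (n - 1) := by
      refine le_trans ?_ hccge
      rw [h1eq]
      simp
    exact mul_nonneg (mul_nonneg hlamr.le (div_nonneg hτp.le hΓ2p.le)) hccnn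
  · have hΓ1 : 0 < Real.Gamma (1 - α) := Real.Gamma_pos_of_pos (by linarith)
    have hΓ2 : Real.Gamma (2 - α) = (1 - α) * Real.Gamma (1 - α) := by
      rw [show (2:ℝ) - α = (1 - α) + 1 by ring,
        Real.Gamma_add_one (by intro h; rw [sub_eq_zero] at h; linarith)]
    have hyT : ((n:ℝ) - 1 + σ) * τ ≤ T := by
      have h2 : ((n:ℝ) - 1 + σ) * τ ≤ (n:ℝ) * τ :=
        mul_le_mul_of_nonneg_right (by linarith) hτ.le
      linarith
    have hrp : T ^ (-α) ≤ (((n:ℝ) - 1 + σ) * τ) ^ (-α) :=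
      Real.rpow_le_rpow_of_nonpos (mul_pos hy hτ) hyT (by linarith)
    have hTα : (0:ℝ) < T ^ α := Real.rpow_pos_of_pos hT _
    calc 1 / 2 * (lam r / (T ^ α * Real.Gamma (1 - α)))
        = lam r / (2 * Real.Gamma (1 - α)) * T ^ (-α) := by
          rw [Real.rpow_neg hT.le]
          field_simp
      _ ≤ lam r / (2 * Real.Gamma (1 - α)) * (((n:ℝ) - 1 + σ) * τ) ^ (-α) := by
          apply mul_le_mul_of_nonneg_left hrp
          exact div_nonneg hlamr.le (by linarith)
      _ = lam r * (τ ^ (-α) / Real.Gamma (2 - α)) * ((1 - α) / 2 * ((n:ℝ) - 1 + σ) ^ (-α)) := by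
          rw [hΓ2, Real.mul_rpow hy.le hτ.le]
          have h1ne : (1:ℝ) - α ≠ 0 := by intro h; rw [sub_eq_zero] at h; linarith
          field_simp
      _ ≤ lam r * (τ ^ (-α) / Real.Gamma (2 - α)) * cc σ α n (n - 1) := by
          apply mul_le_mul_of_nonneg_left hccge
          exact mul_nonneg hlamr.le (div_nonneg hτp.le hΓ2p.le)
end

section
/- Assume the coefficient setup, with at least one α_r lying in the open interval (0,1). Let V be a real inner product space with inner product ⟨·,·⟩ and norm ‖·‖. Then for every integer n ≥ 1 and all v^0, v^1, …, v^n ∈ V: Σ_{k=0}^{n−1} ĉ_k^{(n)} ⟨v^{n−k} − v^{n−k−1}, σ v^n + (1−σ) v^{n−1}⟩ ≥ (1/2) Σ_{k=0}^{n−1} ĉ_k^{(n)} (‖v^{n−k}‖² − ‖v^{n−k−1}‖²). -/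
set_option maxHeartbeats 1000000

section AuxiliaryLemmas

open intervalIntegral Real

lemma Jquad (A B C a b : ℝ) :
    ∫ s in a..b, (A*(s*s)+B*s+C) =
      A*((b^3-a^3)/3) + B*((b^2-a^2)/2) + C*(b-a) := by
  have hf : IntervalIntegrable (fun s : ℝ => A*s^2) MeasureTheory.volume a b :=
    (continuous_const.mul (continuous_pow 2)).intervalIntegrable a b
  have hg : IntervalIntegrable (fun s : ℝ => B*s+C) MeasureTheory.volume a b :=
    ((continuous_const.mul continuous_id).add continuous_const).intervalIntegrable a b
  have hg1 : IntervalIntegrable (fun s : ℝ => B*s) MeasureTheory.volume a b :=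
    (continuous_const.mul continuous_id).intervalIntegrable a b
  have hg2 : IntervalIntegrable (fun s : ℝ => C) MeasureTheory.volume a b :=
    continuous_const.intervalIntegrable a b
  have e1 : (∫ s in a..b, (A*(s*s)+B*s+C)) = ∫ s in a..b, (A*s^2 + (B*s+C)) := by
    apply integral_congr; intro s _; ring
  rw [e1, integral_add hf hg, integral_add hg1 hg2, integral_const_mul,
    integral_const_mul, integral_pow, integral_id, integral_const]
  simp only [smul_eq_mul]
  push_cast; ring

open scoped Interval in
lemma notin_uIcc {a b : ℝ} (ha : 0 < a) (hab : a ≤ b) : (0:ℝ) ∉ [[a, b]] := by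
  rw [Set.uIcc_of_le hab]
  intro h
  exact absurd h.1 (by linarith)

lemma Jpiece {p : ℝ} (A B C : ℝ) {a b : ℝ} (ha : 0 < a) (hab : a ≤ b)
    (hp0 : 0 < p) (hp1 : p < 1) :
    ∫ s in a..b, (A*(s*s)+B*s+C) * s ^ (p-2)
      = A*((b^(p+1) - a^(p+1))/(p+1)) + B*((b^p - a^p)/p)
        + C*((b^(p-1)-a^(p-1))/(p-1)) := by
  have h0 := notin_uIcc ha hab
  have hf : IntervalIntegrable (fun s : ℝ => A * s ^ p) MeasureTheory.volume a b :=
    (intervalIntegrable_rpow (Or.inr h0)).const_mul A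
  have hg1 : IntervalIntegrable (fun s : ℝ => B * s ^ (p-1)) MeasureTheory.volume a b :=
    (intervalIntegrable_rpow (Or.inr h0)).const_mul B
  have hg2 : IntervalIntegrable (fun s : ℝ => C * s ^ (p-2)) MeasureTheory.volume a b :=
    (intervalIntegrable_rpow (Or.inr h0)).const_mul C
  have e1 : (∫ s in a..b, (A*(s*s)+B*s+C) * s ^ (p-2))
      = ∫ s in a..b, (A * s^p + (B * s^(p-1) + C * s^(p-2))) := by
    apply integral_congr
    intro s hs
    have hs0 : 0 < s := by
      rcases Set.mem_uIcc.1 hs with h | h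
      · linarith [h.1]
      · linarith [h.1, hab]
    have e2 : s ^ p = s ^ (p-2) * s * s := by
      rw [← Real.rpow_add_one hs0.ne', ← Real.rpow_add_one hs0.ne']
      ring_nf
    have e3 : s ^ (p-1) = s ^ (p-2) * s := by
      rw [← Real.rpow_add_one hs0.ne']
      ring_nf
    simp only [e2, e3]
    ring
  rw [e1, integral_add hf (hg1.add hg2), integral_add hg1 hg2,
    integral_const_mul, integral_const_mul, integral_const_mul,
    integral_rpow (Or.inl (by linarith)),
    integral_rpow (Or.inl (by linarith : (-1:ℝ) < p - 1)),
    integral_rpow (Or.inr ⟨by intro h; rw [sub_eq_iff_eq_add] at h; norm_num at h; linarith, h0⟩)]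
  ring_nf

lemma J0piece {p c : ℝ} (hc : 0 ≤ c) (hp0 : 0 < p) (hp1 : p < 1) :
    ∫ s in (0:ℝ)..c, (-(s*s)) * s ^ (p-2) = -(c^(p+1)/(p+1)) := by
  have e1 : (∫ s in (0:ℝ)..c, (-(s*s)) * s ^ (p-2))
      = ∫ s in (0:ℝ)..c, -(s^p) := by
    apply integral_congr
    intro s hs
    show -(s*s) * s ^ (p-2) = -(s^p)
    rcases eq_or_lt_of_le (by
      rcases Set.mem_uIcc.1 hs with h | h
      · exact h.1
      · linarith [h.1, h.2] : (0:ℝ) ≤ s) with h | h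
    · rw [← h]
      rw [Real.zero_rpow (by linarith : p ≠ 0)]
      rw [Real.zero_rpow (by intro hh; rw [sub_eq_iff_eq_add] at hh; norm_num at hh; linarith)]
      ring
    · have e2 : s ^ p = s ^ (p-2) * s * s := by
        rw [← Real.rpow_add_one h.ne', ← Real.rpow_add_one h.ne']
        ring_nf
      rw [e2]; ring
  rw [e1, integral_neg, integral_rpow (Or.inl (by linarith)),
    Real.zero_rpow (by positivity : p + 1 ≠ 0)]
  ring

lemma core_b {p x : ℝ} (hx : 0 < x - 1) (hp0 : 0 ≤ p) (hp1 : p ≤ 1) :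
    (x^p + (x-1)^p)/2 ≤ (x^(p+1) - (x-1)^(p+1))/(p+1) := by
  have hx0 : (0:ℝ) < x := by linarith
  rcases eq_or_lt_of_le hp0 with h0 | h0
  · simp only [← h0, Real.rpow_zero, zero_add, Real.rpow_one]
    norm_num
  rcases eq_or_lt_of_le hp1 with h1 | h1
  · subst h1
    rw [Real.rpow_one, Real.rpow_one]
    have e2 : ∀ t : ℝ, 0 < t → t ^ ((1:ℝ)+1) = t * t := by
      intro t ht
      rw [Real.rpow_add ht, Real.rpow_one]
    rw [e2 x hx0, e2 (x-1) hx]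
    nlinarith
  -- main case 0 < p < 1
  set J := ∫ s in (x-1)..x, ((1/2)*(s*s) + (-(2*x-1)/2)*s + (x*(x-1)/2)) * s ^ (p-2) with hJ
  have hiden : (x^(p+1) - (x-1)^(p+1))/(p+1) - (x^p + (x-1)^p)/2 = p*(p-1)*J := by
    rw [hJ, Jpiece _ _ _ hx (by linarith) h0 h1]
    have e1 : x^(p+1) = x^p * x := by rw [Real.rpow_add_one hx0.ne']
    have e2 : (x-1)^(p+1) = (x-1)^p * (x-1) := by rw [Real.rpow_add_one hx.ne']
    have e3 : x^(p-1) * x = x^p := by rw [← Real.rpow_add_one hx0.ne']; ring_nf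
    have e4 : (x-1)^(p-1) * (x-1) = (x-1)^p := by
      rw [← Real.rpow_add_one hx.ne']; ring_nf
    have e3' : x^(p-1) = x^p / x := by rw [← e3]; field_simp
    have e4' : (x-1)^(p-1) = (x-1)^p / (x-1) := by rw [← e4]; field_simp
    rw [e1, e2, e3', e4']
    have hp1' : p + 1 ≠ 0 := by linarith
    have hpm1 : p - 1 ≠ 0 := by intro h; apply absurd h; intro h'; linarith
    field_simp
    ring
  have hJ0 : J ≤ 0 := by
    rw [hJ]
    have : (∫ s in (x-1)..x, (0:ℝ)) = 0 := by simp
    rw [← this]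
    apply integral_mono_on (by linarith)
    · apply ContinuousOn.intervalIntegrable
      rw [Set.uIcc_of_le (by linarith)]
      apply ContinuousOn.mul
      · fun_prop
      · apply ContinuousOn.rpow_const continuousOn_id
        intro s hs
        refine Or.inl ?_
        simp only [id]
        intro h
        rw [h] at hs
        exact absurd hs.1 (by linarith)
    · apply ContinuousOn.intervalIntegrable; fun_prop
    · intro s hs
      have hs0 : 0 < s := by linarith [hs.1]
      have hK : (1/2)*(s*s) + (-(2*x-1)/2)*s + (x*(x-1)/2) ≤ 0 := by nlinarith [hs.1, hs.2]
      have hw : (0:ℝ) ≤ s ^ (p-2) := Real.rpow_nonneg hs0.le _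
      exact mul_nonpos_of_nonpos_of_nonneg hK hw
  nlinarith [hiden, mul_nonneg (neg_nonneg.2 (by nlinarith : p*(p-1) ≤ 0)) (neg_nonneg.2 hJ0)]

lemma intInt_KW {p : ℝ} (A B C : ℝ) {a b : ℝ} (ha : 0 < a) (hab : a ≤ b) :
    IntervalIntegrable (fun s : ℝ => (A*(s*s)+B*s+C) * s ^ (p-2))
      MeasureTheory.volume a b := by
  apply ContinuousOn.intervalIntegrable
  rw [Set.uIcc_of_le hab]
  apply ContinuousOn.mul
  · fun_prop
  · apply ContinuousOn.rpow_const continuousOn_id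
    intro s hs
    refine Or.inl ?_
    simp only [id]
    intro h
    rw [h] at hs
    exact absurd hs.1 (by linarith)

lemma Jle_neg {p a b c : ℝ} (A B C : ℝ) (ha : 0 < a) (hab : a ≤ b) (hbc : b ≤ c)
    (hp0 : 0 < p) (hp1 : p < 1)
    (hK : ∀ s ∈ Set.Icc a b, A*(s*s)+B*s+C ≤ 0) :
    ∫ s in a..b, (A*(s*s)+B*s+C) * s^(p-2)
      ≤ c^(p-2) * (A*((b^3-a^3)/3) + B*((b^2-a^2)/2) + C*(b-a)) := by
  have hstep : (∫ s in a..b, (A*(s*s)+B*s+C) * s^(p-2))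
      ≤ ∫ s in a..b, (A*(s*s)+B*s+C) * c^(p-2) := by
    apply integral_mono_on hab (intInt_KW A B C ha hab)
    · apply ContinuousOn.intervalIntegrable; fun_prop
    · intro s hs
      have hs0 : 0 < s := lt_of_lt_of_le ha hs.1
      have hw : c^(p-2) ≤ s^(p-2) :=
        Real.rpow_le_rpow_of_nonpos hs0 (le_trans hs.2 hbc) (by linarith)
      exact mul_le_mul_of_nonpos_left hw (hK s hs)
  calc (∫ s in a..b, (A*(s*s)+B*s+C) * s^(p-2))
      ≤ ∫ s in a..b, (A*(s*s)+B*s+C) * c^(p-2) := hstep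
    _ = c^(p-2) * (A*((b^3-a^3)/3) + B*((b^2-a^2)/2) + C*(b-a)) := by
        rw [integral_mul_const, Jquad]; ring

lemma Jle_pos {p a b c : ℝ} (A B C : ℝ) (hc : 0 < c) (hca : c ≤ a) (hab : a ≤ b)
    (hp0 : 0 < p) (hp1 : p < 1)
    (hK : ∀ s ∈ Set.Icc a b, 0 ≤ A*(s*s)+B*s+C) :
    ∫ s in a..b, (A*(s*s)+B*s+C) * s^(p-2)
      ≤ c^(p-2) * (A*((b^3-a^3)/3) + B*((b^2-a^2)/2) + C*(b-a)) := by
  have hstep : (∫ s in a..b, (A*(s*s)+B*s+C) * s^(p-2))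
      ≤ ∫ s in a..b, (A*(s*s)+B*s+C) * c^(p-2) := by
    apply integral_mono_on hab (intInt_KW A B C (lt_of_lt_of_le hc hca) hab)
    · apply ContinuousOn.intervalIntegrable; fun_prop
    · intro s hs
      have hs0 : 0 < s := lt_of_lt_of_le (lt_of_lt_of_le hc hca) hs.1
      have hw : s^(p-2) ≤ c^(p-2) :=
        Real.rpow_le_rpow_of_nonpos hc (le_trans hca hs.1) (by linarith)
      exact mul_le_mul_of_nonneg_left hw (hK s hs)
  calc (∫ s in a..b, (A*(s*s)+B*s+C) * s^(p-2))
      ≤ ∫ s in a..b, (A*(s*s)+B*s+C) * c^(p-2) := hstep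
    _ = c^(p-2) * (A*((b^3-a^3)/3) + B*((b^2-a^2)/2) + C*(b-a)) := by
        rw [integral_mul_const, Jquad]; ring

lemma rpow_two' {t : ℝ} (ht : 0 < t) : t ^ ((1:ℝ)+1) = t * t := by
  rw [Real.rpow_add ht, Real.rpow_one]

lemma core_M {p x : ℝ} (hx : 0 < x - 1) (hp0 : 0 ≤ p) (hp1 : p ≤ 1) :
    ((x+2)^(p+1) - 2*(x+1)^(p+1) + x^(p+1))/(p+1) - ((x+2)^p - 2*(x+1)^p + x^p)/2
      ≤ ((x+1)^(p+1) - 2*x^(p+1) + (x-1)^(p+1))/(p+1)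
        - ((x+1)^p - 2*x^p + (x-1)^p)/2 := by
  have hx0 : (0:ℝ) < x := by linarith
  have hx1 : (0:ℝ) < x + 1 := by linarith
  have hx2 : (0:ℝ) < x + 2 := by linarith
  rcases eq_or_lt_of_le hp0 with h0 | h0
  · simp only [← h0, Real.rpow_zero, zero_add, Real.rpow_one]
    linarith
  rcases eq_or_lt_of_le hp1 with h1 | h1
  · subst h1
    simp only [Real.rpow_one, rpow_two' hx0, rpow_two' hx1, rpow_two' hx2, rpow_two' hx]
    nlinarith
  set J1 := ∫ s in (x-1)..x,
    ((-1/2)*(s*s) + (x - 3/2)*s + (-(1/2)*x^2 + (3/2)*x - 1)) * s^(p-2) with hJ1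
  set J2 := ∫ s in x..(x+1),
    ((1:ℝ)*(s*s) + (-2*x)*s + (x^2 - 1)) * s^(p-2) with hJ2
  set J3 := ∫ s in (x+1)..(x+2),
    ((-1/2)*(s*s) + (x + 3/2)*s + (-(1/2)*x^2 - (3/2)*x - 1)) * s^(p-2) with hJ3
  have hiden : (((x+1)^(p+1) - 2*x^(p+1) + (x-1)^(p+1))/(p+1)
        - ((x+1)^p - 2*x^p + (x-1)^p)/2)
      - (((x+2)^(p+1) - 2*(x+1)^(p+1) + x^(p+1))/(p+1)
        - ((x+2)^p - 2*(x+1)^p + x^p)/2)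
      = p*(p-1)*(J1 + J2 + J3) := by
    rw [hJ1, hJ2, hJ3, Jpiece _ _ _ hx (by linarith) h0 h1,
      Jpiece _ _ _ hx0 (by linarith) h0 h1, Jpiece _ _ _ hx1 (by linarith) h0 h1]
    have e1 : (x-1)^(p+1) = (x-1)^p * (x-1) := Real.rpow_add_one hx.ne' p
    have e2 : x^(p+1) = x^p * x := Real.rpow_add_one hx0.ne' p
    have e3 : (x+1)^(p+1) = (x+1)^p * (x+1) := Real.rpow_add_one hx1.ne' p
    have e4 : (x+2)^(p+1) = (x+2)^p * (x+2) := Real.rpow_add_one hx2.ne' p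
    have f1 : (x-1)^(p-1) = (x-1)^p / (x-1) := by
      rw [eq_div_iff hx.ne', ← Real.rpow_add_one hx.ne']; ring_nf
    have f2 : x^(p-1) = x^p / x := by
      rw [eq_div_iff hx0.ne', ← Real.rpow_add_one hx0.ne']; ring_nf
    have f3 : (x+1)^(p-1) = (x+1)^p / (x+1) := by
      rw [eq_div_iff hx1.ne', ← Real.rpow_add_one hx1.ne']; ring_nf
    have f4 : (x+2)^(p-1) = (x+2)^p / (x+2) := by
      rw [eq_div_iff hx2.ne', ← Real.rpow_add_one hx2.ne']; ring_nf
    rw [e1, e2, e3, e4, f1, f2, f3, f4]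
    have hp1' : p + 1 ≠ 0 := by linarith
    have hpm1 : p - 1 ≠ 0 := by intro h; apply absurd h; intro h'; linarith
    have hp' : p ≠ 0 := by linarith
    field_simp
    ring
  have hb1 : J1 ≤ (x+1)^(p-2) * ((-1/2)*((x^3-(x-1)^3)/3)
      + (x-3/2)*((x^2-(x-1)^2)/2) + (-(1/2)*x^2 + (3/2)*x - 1)*(x-(x-1))) := by
    rw [hJ1]
    apply Jle_neg _ _ _ hx (by linarith) (by linarith) h0 h1
    intro s hs
    nlinarith [mul_nonneg (by linarith [hs.1, hs.2] : (0:ℝ) ≤ 1-(x-s))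
      (by linarith [hs.1, hs.2] : (0:ℝ) ≤ 2-(x-s))]
  have hb2 : J2 ≤ (x+1)^(p-2) * ((1:ℝ)*(((x+1)^3-x^3)/3)
      + (-2*x)*(((x+1)^2-x^2)/2) + (x^2-1)*((x+1)-x)) := by
    rw [hJ2]
    apply Jle_neg _ _ _ hx0 (by linarith) (by linarith) h0 h1
    intro s hs
    nlinarith [mul_nonneg (by linarith [hs.1, hs.2] : (0:ℝ) ≤ (x+1-s))
      (by linarith [hs.1, hs.2] : (0:ℝ) ≤ 2-(x+1-s))]
  have hb3 : J3 ≤ (x+1)^(p-2) * ((-1/2)*(((x+2)^3-(x+1)^3)/3)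
      + (x+3/2)*(((x+2)^2-(x+1)^2)/2) + (-(1/2)*x^2 - (3/2)*x - 1)*((x+2)-(x+1))) := by
    rw [hJ3]
    apply Jle_pos _ _ _ hx1 (by linarith) (by linarith) h0 h1
    intro s hs
    nlinarith [mul_nonneg (by linarith [hs.1, hs.2] : (0:ℝ) ≤ (x+2-s))
      (by linarith [hs.1, hs.2] : (0:ℝ) ≤ 1-(x+2-s))]
  have hsum : J1 + J2 + J3 ≤ (x+1)^(p-2) * (-1) := by
    have : (x+1)^(p-2) * ((-1/2)*((x^3-(x-1)^3)/3)
        + (x-3/2)*((x^2-(x-1)^2)/2) + (-(1/2)*x^2 + (3/2)*x - 1)*(x-(x-1)))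
      + (x+1)^(p-2) * ((1:ℝ)*(((x+1)^3-x^3)/3)
        + (-2*x)*(((x+1)^2-x^2)/2) + (x^2-1)*((x+1)-x))
      + (x+1)^(p-2) * ((-1/2)*(((x+2)^3-(x+1)^3)/3)
        + (x+3/2)*(((x+2)^2-(x+1)^2)/2) + (-(1/2)*x^2 - (3/2)*x - 1)*((x+2)-(x+1)))
      = (x+1)^(p-2) * (-1) := by ring
    linarith [hb1, hb2, hb3, this.le, this.ge]
  have hJneg : J1 + J2 + J3 ≤ 0 := by
    have := Real.rpow_nonneg hx1.le (p-2)
    nlinarith [hsum]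
  nlinarith [hiden, mul_nonneg (neg_nonneg.2 (by nlinarith : p*(p-1) ≤ 0))
    (neg_nonneg.2 hJneg)]

lemma core_M2 {p x : ℝ} (hx : 0 < x - 1) (hp0 : 0 ≤ p) (hp1 : p ≤ 1) :
    (3/2)*(x+1)^p - (1/2)*x^p - ((x+1)^(p+1) - x^(p+1))/(p+1)
      ≤ ((x+1)^(p+1) - 2*x^(p+1) + (x-1)^(p+1))/(p+1)
        - ((x+1)^p - 2*x^p + (x-1)^p)/2 := by
  have hx0 : (0:ℝ) < x := by linarith
  have hx1 : (0:ℝ) < x + 1 := by linarith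
  rcases eq_or_lt_of_le hp0 with h0 | h0
  · simp only [← h0, Real.rpow_zero, zero_add, Real.rpow_one]
    linarith
  rcases eq_or_lt_of_le hp1 with h1 | h1
  · subst h1
    simp only [Real.rpow_one, rpow_two' hx0, rpow_two' hx1, rpow_two' hx]
    nlinarith
  set J1 := ∫ s in (x-1)..x,
    ((-1/2)*(s*s) + (x - 3/2)*s + (-(1/2)*x^2 + (3/2)*x - 1)) * s^(p-2) with hJ1
  set J2 := ∫ s in x..(x+1),
    ((1:ℝ)*(s*s) + (-2*x)*s + (x^2 - 1)) * s^(p-2) with hJ2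
  have hiden : (((x+1)^(p+1) - 2*x^(p+1) + (x-1)^(p+1))/(p+1)
        - ((x+1)^p - 2*x^p + (x-1)^p)/2)
      - ((3/2)*(x+1)^p - (1/2)*x^p - ((x+1)^(p+1) - x^(p+1))/(p+1))
      = p*(p-1)*(J1 + J2) := by
    rw [hJ1, hJ2, Jpiece _ _ _ hx (by linarith) h0 h1,
      Jpiece _ _ _ hx0 (by linarith) h0 h1]
    have e1 : (x-1)^(p+1) = (x-1)^p * (x-1) := Real.rpow_add_one hx.ne' p
    have e2 : x^(p+1) = x^p * x := Real.rpow_add_one hx0.ne' p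
    have e3 : (x+1)^(p+1) = (x+1)^p * (x+1) := Real.rpow_add_one hx1.ne' p
    have f1 : (x-1)^(p-1) = (x-1)^p / (x-1) := by
      rw [eq_div_iff hx.ne', ← Real.rpow_add_one hx.ne']; ring_nf
    have f2 : x^(p-1) = x^p / x := by
      rw [eq_div_iff hx0.ne', ← Real.rpow_add_one hx0.ne']; ring_nf
    have f3 : (x+1)^(p-1) = (x+1)^p / (x+1) := by
      rw [eq_div_iff hx1.ne', ← Real.rpow_add_one hx1.ne']; ring_nf
    rw [e1, e2, e3, f1, f2, f3]
    have hp1' : p + 1 ≠ 0 := by linarith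
    have hpm1 : p - 1 ≠ 0 := by intro h; apply absurd h; intro h'; linarith
    have hp' : p ≠ 0 := by linarith
    field_simp
    ring
  have hb1 : J1 ≤ x^(p-2) * ((-1/2)*((x^3-(x-1)^3)/3)
      + (x-3/2)*((x^2-(x-1)^2)/2) + (-(1/2)*x^2 + (3/2)*x - 1)*(x-(x-1))) := by
    rw [hJ1]
    apply Jle_neg _ _ _ hx (by linarith) (le_refl x) h0 h1
    intro s hs
    nlinarith [mul_nonneg (by linarith [hs.1, hs.2] : (0:ℝ) ≤ 1-(x-s))
      (by linarith [hs.1, hs.2] : (0:ℝ) ≤ 2-(x-s))]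
  have hb2 : J2 ≤ (x+1)^(p-2) * ((1:ℝ)*(((x+1)^3-x^3)/3)
      + (-2*x)*(((x+1)^2-x^2)/2) + (x^2-1)*((x+1)-x)) := by
    rw [hJ2]
    apply Jle_neg _ _ _ hx0 (by linarith) (le_refl (x+1)) h0 h1
    intro s hs
    nlinarith [mul_nonneg (by linarith [hs.1, hs.2] : (0:ℝ) ≤ (x+1-s))
      (by linarith [hs.1, hs.2] : (0:ℝ) ≤ 2-(x+1-s))]
  have hq1 : (-1/2)*((x^3-(x-1)^3)/3)
      + (x-3/2)*((x^2-(x-1)^2)/2) + (-(1/2)*x^2 + (3/2)*x - 1)*(x-(x-1))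
      = -5/12 := by ring
  have hq2 : (1:ℝ)*(((x+1)^3-x^3)/3)
      + (-2*x)*(((x+1)^2-x^2)/2) + (x^2-1)*((x+1)-x) = -2/3 := by ring
  have hJneg : J1 + J2 ≤ 0 := by
    rw [hq1] at hb1
    rw [hq2] at hb2
    have w1 := Real.rpow_nonneg hx0.le (p-2)
    have w2 := Real.rpow_nonneg hx1.le (p-2)
    nlinarith [hb1, hb2]
  nlinarith [hiden, mul_nonneg (neg_nonneg.2 (by nlinarith : p*(p-1) ≤ 0))
    (neg_nonneg.2 hJneg)]

lemma core_last {p y : ℝ} (hy : 0 < y - 1) (hp0 : 0 ≤ p) (hp1 : p ≤ 1) :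
    (y^(p+1) - (y-1)^(p+1))/(p+1) ≤ (3/2)*y^p - (1/2)*(y-1)^p := by
  have hy0 : (0:ℝ) < y := by linarith
  have hcf : (∫ s in (y-1)..y, s^p) = (y^(p+1) - (y-1)^(p+1))/(p+1) :=
    integral_rpow (Or.inl (by linarith))
  have hmono : (∫ s in (y-1)..y, s^p) ≤ ∫ s in (y-1)..y, y^p := by
    apply integral_mono_on (by linarith)
    · exact intervalIntegrable_rpow (Or.inr (notin_uIcc hy (by linarith)))
    · exact continuous_const.intervalIntegrable _ _
    · intro s hs
      exact Real.rpow_le_rpow (by linarith [hs.1]) hs.2 hp0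
  have hconst : (∫ s in (y-1)..y, y^p) = y^p := by
    rw [integral_const]; simp
  have hle : (y-1)^p ≤ y^p := Real.rpow_le_rpow (by linarith) (by linarith) hp0
  rw [hcf] at hmono
  rw [hconst] at hmono
  linarith

lemma core_keyB {p σ : ℝ} (hσ1 : 1/2 ≤ σ) (hσ2 : σ ≤ 1) (hp0 : 0 ≤ p) (hp1 : p ≤ 1) :
    2*σ^(p+1)/(p+1) - σ^p
      ≤ (2*σ-1)*(σ^p + (((1+σ)^(p+1) - σ^(p+1))/(p+1) - ((1+σ)^p + σ^p)/2))
        - σ^2*(((1+σ)^p - σ^p)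
          + (((2+σ)^(p+1) - (1+σ)^(p+1))/(p+1) - ((2+σ)^p + (1+σ)^p)/2)
          - (((1+σ)^(p+1) - σ^(p+1))/(p+1) - ((1+σ)^p + σ^p)/2)) := by
  have hσ0 : (0:ℝ) < σ := by linarith
  have hσ1' : (0:ℝ) < 1 + σ := by linarith
  have hσ2' : (0:ℝ) < 2 + σ := by linarith
  rcases eq_or_lt_of_le hp0 with h0 | h0
  · simp only [← h0, Real.rpow_zero, zero_add, Real.rpow_one]
    ring_nf
    nlinarith
  rcases eq_or_lt_of_le hp1 with h1 | h1
  · subst h1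
    simp only [Real.rpow_one, rpow_two' hσ0, rpow_two' hσ1', rpow_two' hσ2']
    nlinarith
  have hE : (0:ℝ) ≤ σ^2 + 2*σ - 1 := by nlinarith
  set J0 := ∫ s in (0:ℝ)..σ, (-(s*s)) * s^(p-2) with hJ0
  set J2 := ∫ s in σ..(1+σ),
    (((σ^2+2*σ-1)/2)*(s*s) + (-σ^3-(3/2)*σ^2+1/2)*s
      + ((σ^4+σ^3-σ^2-σ)/2)) * s^(p-2) with hJ2
  set J3 := ∫ s in (1+σ)..(2+σ),
    ((-(1/2)*σ^2)*(s*s) + (σ^3+(3/2)*σ^2)*s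
      + (-(1/2)*σ^4-(3/2)*σ^3-σ^2)) * s^(p-2) with hJ3
  have hiden : ((2*σ-1)*(σ^p + (((1+σ)^(p+1) - σ^(p+1))/(p+1) - ((1+σ)^p + σ^p)/2))
        - σ^2*(((1+σ)^p - σ^p)
          + (((2+σ)^(p+1) - (1+σ)^(p+1))/(p+1) - ((2+σ)^p + (1+σ)^p)/2)
          - (((1+σ)^(p+1) - σ^(p+1))/(p+1) - ((1+σ)^p + σ^p)/2)))
      - (2*σ^(p+1)/(p+1) - σ^p) = p*(p-1)*(J0 + J2 + J3) := by
    rw [hJ0, hJ2, hJ3, J0piece hσ0.le h0 h1,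
      Jpiece _ _ _ hσ0 (by linarith) h0 h1, Jpiece _ _ _ hσ1' (by linarith) h0 h1]
    have e1 : σ^(p+1) = σ^p * σ := Real.rpow_add_one hσ0.ne' p
    have e2 : (1+σ)^(p+1) = (1+σ)^p * (1+σ) := Real.rpow_add_one hσ1'.ne' p
    have e3 : (2+σ)^(p+1) = (2+σ)^p * (2+σ) := Real.rpow_add_one hσ2'.ne' p
    have f1 : σ^(p-1) = σ^p / σ := by
      rw [eq_div_iff hσ0.ne', ← Real.rpow_add_one hσ0.ne']; ring_nf
    have f2 : (1+σ)^(p-1) = (1+σ)^p / (1+σ) := by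
      rw [eq_div_iff hσ1'.ne', ← Real.rpow_add_one hσ1'.ne']; ring_nf
    have f3 : (2+σ)^(p-1) = (2+σ)^p / (2+σ) := by
      rw [eq_div_iff hσ2'.ne', ← Real.rpow_add_one hσ2'.ne']; ring_nf
    rw [e1, e2, e3, f1, f2, f3]
    have hp1' : p + 1 ≠ 0 := by linarith
    have hpm1 : p - 1 ≠ 0 := by intro h; apply absurd h; intro h'; linarith
    have hp' : p ≠ 0 := by linarith
    field_simp
    ring
  have hb0 : J0 ≤ (1+σ)^(p-2) * (-(σ^3)/3) := by
    have hcf : J0 = -(σ^(p+1)/(p+1)) := J0piece hσ0.le h0 h1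
    have hcf2 : (∫ s in (0:ℝ)..σ, -(s^p)) = -(σ^(p+1)/(p+1)) := by
      rw [integral_neg, integral_rpow (Or.inl (by linarith : (-1:ℝ) < p)),
        Real.zero_rpow (by positivity : p + 1 ≠ 0)]
      ring
    rw [hcf, ← hcf2]
    have hmono : (∫ s in (0:ℝ)..σ, -(s^p))
        ≤ ∫ s in (0:ℝ)..σ, (-(s*s)) * (1+σ)^(p-2) := by
      apply integral_mono_on hσ0.le
      · exact (intervalIntegrable_rpow' (by linarith)).neg
      · apply ContinuousOn.intervalIntegrable; fun_prop
      · intro s hs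
        rcases eq_or_lt_of_le hs.1 with hz | hz
        · rw [← hz, Real.zero_rpow (by linarith : p ≠ 0)]
          norm_num
        · have hw : (1+σ)^(p-2) ≤ s^(p-2) :=
            Real.rpow_le_rpow_of_nonpos hz (by linarith [hs.2]) (by linarith)
          have e2 : s ^ p = s ^ (p-2) * s * s := by
            rw [← Real.rpow_add_one hz.ne', ← Real.rpow_add_one hz.ne']
            ring_nf
          rw [e2]
          nlinarith [mul_le_mul_of_nonneg_right hw (by nlinarith : (0:ℝ) ≤ s*s)]
    have hrhs : (∫ s in (0:ℝ)..σ, (-(s*s)) * (1+σ)^(p-2))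
        = (1+σ)^(p-2) * (-(σ^3)/3) := by
      rw [integral_mul_const]
      have : (∫ s in (0:ℝ)..σ, (-(s*s)))
          = (-1)*((σ^3-0^3)/3) + 0*((σ^2-0^2)/2) + 0*(σ-0) := by
        rw [← Jquad (-1) 0 0 0 σ]
        apply integral_congr
        intro s _
        ring
      rw [this]
      ring
    linarith [hmono, hrhs.le, hrhs.ge]
  have hb2 : J2 ≤ (1+σ)^(p-2) * (((σ^2+2*σ-1)/2)*(((1+σ)^3-σ^3)/3)
      + (-σ^3-(3/2)*σ^2+1/2)*(((1+σ)^2-σ^2)/2) + ((σ^4+σ^3-σ^2-σ)/2)*((1+σ)-σ)) := by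
    rw [hJ2]
    apply Jle_neg _ _ _ hσ0 (by linarith) (le_refl (1+σ)) h0 h1
    intro s hs
    have key : ((σ^2+2*σ-1)/2)*(s*s) + (-σ^3-(3/2)*σ^2+1/2)*s + ((σ^4+σ^3-σ^2-σ)/2)
        = -(σ^2*(1+σ-s)) - (σ^2+2*σ-1)*((1+σ-s)*(1-(1+σ-s)))/2 := by ring
    rw [key]
    nlinarith [mul_nonneg (mul_nonneg hE (by linarith [hs.2] : (0:ℝ) ≤ 1+σ-s))
      (by linarith [hs.1] : (0:ℝ) ≤ 1-(1+σ-s)),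
      mul_nonneg (by positivity : (0:ℝ) ≤ σ^2) (by linarith [hs.2] : (0:ℝ) ≤ 1+σ-s)]
  have hb3 : J3 ≤ (1+σ)^(p-2) * ((-(1/2)*σ^2)*(((2+σ)^3-(1+σ)^3)/3)
      + (σ^3+(3/2)*σ^2)*(((2+σ)^2-(1+σ)^2)/2) + (-(1/2)*σ^4-(3/2)*σ^3-σ^2)*((2+σ)-(1+σ))) := by
    rw [hJ3]
    apply Jle_pos _ _ _ hσ1' (le_refl (1+σ)) (by linarith) h0 h1
    intro s hs
    have key : (-(1/2)*σ^2)*(s*s) + (σ^3+(3/2)*σ^2)*s + (-(1/2)*σ^4-(3/2)*σ^3-σ^2)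
        = σ^2*((2+σ-s)*(1-(2+σ-s)))/2 := by ring
    rw [key]
    have := mul_nonneg (by linarith [hs.2] : (0:ℝ) ≤ 2+σ-s)
      (by linarith [hs.1] : (0:ℝ) ≤ 1-(2+σ-s))
    positivity
  have hJneg : J0 + J2 + J3 ≤ 0 := by
    have hq : (-(σ^3)/3) + (((σ^2+2*σ-1)/2)*(((1+σ)^3-σ^3)/3)
        + (-σ^3-(3/2)*σ^2+1/2)*(((1+σ)^2-σ^2)/2) + ((σ^4+σ^3-σ^2-σ)/2)*((1+σ)-σ))
      + ((-(1/2)*σ^2)*(((2+σ)^3-(1+σ)^3)/3)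
        + (σ^3+(3/2)*σ^2)*(((2+σ)^2-(1+σ)^2)/2) + (-(1/2)*σ^4-(3/2)*σ^3-σ^2)*((2+σ)-(1+σ)))
      = -σ^3/3 - σ^2/2 - (2*σ-1)/12 := by ring
    have hqneg : -σ^3/3 - σ^2/2 - (2*σ-1)/12 ≤ 0 := by nlinarith
    have w := Real.rpow_nonneg hσ1'.le (p-2)
    nlinarith [hb0, hb2, hb3, mul_nonneg w (by linarith : (0:ℝ) ≤ -(-σ^3/3 - σ^2/2 - (2*σ-1)/12))]
  nlinarith [hiden, mul_nonneg (neg_nonneg.2 (by nlinarith : p*(p-1) ≤ 0))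
    (neg_nonneg.2 hJneg)]

lemma abel_sum (γ T : ℕ → ℝ) (M : ℕ) :
    ∑ j ∈ Finset.range (M+1), γ (j+1) * (T (j+1) - T j)
      = γ (M+1) * T (M+1) - γ 1 * T 0
        + ∑ j ∈ Finset.range M, (γ (j+1) - γ (j+2)) * T (j+1) := by
  induction M with
  | zero => simp [Finset.sum_range_one]; ring
  | succ M ih =>
    rw [Finset.sum_range_succ, ih, Finset.sum_range_succ]
    ring

lemma norm_sq_diff {V : Type*} [NormedAddCommGroup V] [InnerProductSpace ℝ V]
    (a b : V) :
    ‖a‖^2 - ‖b‖^2 = 2 * (inner ℝ (a - b) a : ℝ) - ‖a - b‖^2 := by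
  have h1 : ‖a - b‖^2 = ‖a‖^2 - 2 * (inner ℝ a b : ℝ) + ‖b‖^2 := norm_sub_sq_real a b
  have h2 : (inner ℝ (a - b) a : ℝ) = ‖a‖^2 - (inner ℝ a b : ℝ) := by
    rw [inner_sub_left, real_inner_self_eq_norm_sq, real_inner_comm b a]
  rw [h1, h2]
  ring

lemma inner_step {V : Type*} [NormedAddCommGroup V] [InnerProductSpace ℝ V]
    (d t : V) :
    (inner ℝ d t : ℝ) + (1/2) * ‖d‖^2 = (1/2) * (‖t + d‖^2 - ‖t‖^2) := by
  have h : ‖t + d‖^2 = ‖t‖^2 + 2 * (inner ℝ t d : ℝ) + ‖d‖^2 := norm_add_sq_real t d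
  rw [h, real_inner_comm t d]
  ring

lemma partI {V : Type*} [NormedAddCommGroup V] [InnerProductSpace ℝ V]
    (γ : ℕ → ℝ) (σ : ℝ) (hσ : 1/2 ≤ σ) (n : ℕ) (hn : 2 ≤ n)
    (hmono : ∀ k, 1 ≤ k → k ≤ n-2 → γ (k+1) ≤ γ k)
    (hlast : 0 ≤ γ (n-1))
    (hB : σ^2 * γ 1 ≤ (2*σ-1) * γ 0)
    (v : ℕ → V) :
    ∑ k ∈ Finset.range n, γ k *
        (inner ℝ (v (n - k) - v (n - k - 1)) (σ • v n + (1 - σ) • v (n - 1)) : ℝ) ≥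
      1 / 2 * ∑ k ∈ Finset.range n, γ k * (‖v (n - k)‖ ^ 2 - ‖v (n - k - 1)‖ ^ 2) := by
  obtain ⟨N, rfl⟩ : ∃ N, n = N + 2 := ⟨n - 2, by omega⟩
  set n := N + 2 with hn2
  set w : V := σ • v n + (1 - σ) • v (n - 1) with hw
  set d : ℕ → V := fun k => v (n - k) - v (n - k - 1) with hd
  set t : ℕ → V := fun j => σ • d 0 + ∑ i ∈ Finset.range j, d (i+1) with ht
  have htstep : ∀ j, t (j+1) = t j + d (j+1) := by
    intro j
    simp only [ht, Finset.sum_range_succ]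
    abel
  have hT0 : ‖t 0‖^2 = σ^2 * ‖d 0‖^2 := by
    simp only [ht, Finset.range_zero, Finset.sum_empty, add_zero, norm_smul]
    rw [mul_pow]
    simp [Real.norm_eq_abs, sq_abs]
  -- w - v (n - (j+1)) = t j for j ≤ N
  have hwv : ∀ j, j ≤ N → w - v (n - (j+1)) = t j := by
    intro j
    induction j with
    | zero =>
      intro _
      simp only [ht, Finset.range_zero, Finset.sum_empty, add_zero, hw, hd,
        Nat.sub_zero]
      module
    | succ j ih =>
      intro hj
      have hj' : j ≤ N := by omega
      have e1 : n - (j+1+1) = n - (j+1) - 1 := by omega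
      have e2 : w - v (n - (j+1+1)) = (w - v (n - (j+1))) + d (j+1) := by
        rw [e1]
        simp only [hd]
        abel
      rw [e2, ih hj', htstep]
  -- termwise identity
  have hterm : ∀ k, γ k * (inner ℝ (d k) w : ℝ)
      - 1/2 * (γ k * (‖v (n - k)‖^2 - ‖v (n - k - 1)‖^2))
      = γ k * ((inner ℝ (d k) (w - v (n - k)) : ℝ) + (1/2) * ‖d k‖^2) := by
    intro k
    have hns : ‖v (n-k)‖^2 - ‖v (n-k-1)‖^2
        = 2 * (inner ℝ (d k) (v (n-k)) : ℝ) - ‖d k‖^2 := norm_sq_diff _ _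
    have hsub : (inner ℝ (d k) (w - v (n - k)) : ℝ)
        = (inner ℝ (d k) w : ℝ) - (inner ℝ (d k) (v (n-k)) : ℝ) := by
      rw [inner_sub_right]
    rw [hns, hsub]
    ring
  -- sum of g
  have hgoal : (∑ k ∈ Finset.range n, γ k * (inner ℝ (d k) w : ℝ))
      - 1/2 * ∑ k ∈ Finset.range n, γ k * (‖v (n - k)‖ ^ 2 - ‖v (n - k - 1)‖ ^ 2)
      = ∑ k ∈ Finset.range n, γ k * ((inner ℝ (d k) (w - v (n - k)) : ℝ)
          + (1/2) * ‖d k‖^2) := by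
    rw [Finset.mul_sum, ← Finset.sum_sub_distrib]
    exact Finset.sum_congr rfl fun k _ => hterm k
  have hsplit : ∑ k ∈ Finset.range n, γ k * ((inner ℝ (d k) (w - v (n - k)) : ℝ)
          + (1/2) * ‖d k‖^2)
      = (∑ j ∈ Finset.range (N+1), γ (j+1) * ((inner ℝ (d (j+1)) (w - v (n - (j+1))) : ℝ)
          + (1/2) * ‖d (j+1)‖^2))
        + γ 0 * ((inner ℝ (d 0) (w - v n) : ℝ) + (1/2) * ‖d 0‖^2) := by
    have : n = (N + 1) + 1 := rfl
    rw [this, Finset.sum_range_succ']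
    simp only [Nat.sub_zero]
  -- k = 0 term
  have h0term : γ 0 * ((inner ℝ (d 0) (w - v n) : ℝ) + (1/2) * ‖d 0‖^2)
      = γ 0 * (σ - 1/2) * ‖d 0‖^2 := by
    have hwv0 : w - v n = (σ - 1) • d 0 := by
      simp only [hw, hd, Nat.sub_zero]
      module
    rw [hwv0, real_inner_smul_right, real_inner_self_eq_norm_sq]
    ring
  -- j terms
  have hjterm : ∀ j ∈ Finset.range (N+1),
      γ (j+1) * ((inner ℝ (d (j+1)) (w - v (n - (j+1))) : ℝ) + (1/2) * ‖d (j+1)‖^2)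
      = γ (j+1) * ((1/2) * (‖t (j+1)‖^2 - ‖t j‖^2)) := by
    intro j hj
    rw [hwv j (by simp at hj; omega)]
    rw [show (inner ℝ (d (j+1)) (t j) : ℝ) + (1/2) * ‖d (j+1)‖^2
        = (1/2) * (‖t j + d (j+1)‖^2 - ‖t j‖^2) from inner_step _ _, ← htstep]
  have habel : ∑ j ∈ Finset.range (N+1), γ (j+1) * ((1/2) * (‖t (j+1)‖^2 - ‖t j‖^2))
      = (1/2) * (γ (N+1) * ‖t (N+1)‖^2 - γ 1 * ‖t 0‖^2
        + ∑ j ∈ Finset.range N, (γ (j+1) - γ (j+2)) * ‖t (j+1)‖^2) := by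
    rw [← abel_sum (fun k => γ k) (fun k => ‖t k‖^2) N, Finset.mul_sum]
    exact Finset.sum_congr rfl fun j _ => by ring
  -- positivity
  have hpos1 : 0 ≤ γ (N+1) * ‖t (N+1)‖^2 := by
    have : γ (N+1) = γ (n-1) := by rfl
    rw [this]
    positivity
  have hpos2 : 0 ≤ ∑ j ∈ Finset.range N, (γ (j+1) - γ (j+2)) * ‖t (j+1)‖^2 := by
    apply Finset.sum_nonneg
    intro j hj
    have hmj : γ (j+2) ≤ γ (j+1) := by
      apply hmono (j+1) (by omega)
      simp only [Finset.mem_range] at hj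
      omega
    have : (0:ℝ) ≤ γ (j+1) - γ (j+2) := by linarith
    positivity
  have hpos3 : 0 ≤ γ 0 * (σ - 1/2) * ‖d 0‖^2 - (1/2) * (γ 1 * ‖t 0‖^2) := by
    rw [hT0]
    have h2 : γ 0 * (σ - 1/2) * ‖d 0‖^2 - (1/2) * (γ 1 * (σ^2 * ‖d 0‖^2))
        = (1/2) * ((2*σ-1) * γ 0 - σ^2 * γ 1) * ‖d 0‖^2 := by ring
    rw [h2]
    have : (0:ℝ) ≤ (2*σ-1) * γ 0 - σ^2 * γ 1 := by linarith
    positivity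
  rw [ge_iff_le, ← sub_nonneg, hgoal, hsplit]
  rw [Finset.sum_congr rfl hjterm, habel, h0term]
  linarith [hpos1, hpos2, hpos3]

lemma glue_b {σ α : ℝ} (hσ0 : 0 < σ) (hα0 : 0 ≤ α) (hα1 : α ≤ 1)
    (l : ℕ) (hl : 1 ≤ l) : 0 ≤ bb σ α l := by
  have hx : 0 < ((l:ℝ) + σ) - 1 := by
    have : (1:ℝ) ≤ (l:ℝ) := by exact_mod_cast hl
    linarith
  have h := core_b (p := 1 - α) (x := (l:ℝ) + σ) hx (by linarith) (by linarith)
  rw [bb]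
  ring_nf at h ⊢
  linarith [h]

lemma glue_last {σ α : ℝ} (hσ0 : 0 < σ) (hα0 : 0 ≤ α) (hα1 : α ≤ 1)
    (n : ℕ) (hn : 2 ≤ n) : 0 ≤ cc σ α n (n-1) := by
  obtain ⟨M, rfl⟩ : ∃ M, n = M + 2 := ⟨n - 2, by omega⟩
  have e : cc σ α (M+2) (M+2-1) = aa σ α (M+1) - bb σ α (M+1) := by
    rw [cc]
    rw [if_neg (by omega), if_neg (by omega), if_pos (by omega)]
    norm_num
  rw [e, aa, bb]
  have hy : 0 < ((M:ℝ) + 1 + σ) - 1 := by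
    have hM : (0:ℝ) ≤ (M:ℝ) := Nat.cast_nonneg M
    linarith
  have h := core_last (p := 1 - α) (y := (M:ℝ) + 1 + σ) hy (by linarith) (by linarith)
  push_cast
  ring_nf at h ⊢
  linarith [h]

lemma glue_M {σ α : ℝ} (hσ0 : 0 < σ) (hα0 : 0 ≤ α) (hα1 : α ≤ 1)
    (n k : ℕ) (hk : 1 ≤ k) (hk2 : k + 1 ≤ n - 2) (hn : 2 ≤ n) :
    cc σ α n (k+1) ≤ cc σ α n k := by
  obtain ⟨l, rfl⟩ : ∃ l, k = l + 1 := ⟨k - 1, by omega⟩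
  have e1 : cc σ α n (l+1) = aa σ α (l+1) + bb σ α (l+2) - bb σ α (l+1) := by
    rw [cc, if_neg (by omega), if_neg (by omega), if_neg (by omega)]
  have e2 : cc σ α n (l+1+1) = aa σ α (l+2) + bb σ α (l+3) - bb σ α (l+2) := by
    rw [cc, if_neg (by omega), if_neg (by omega), if_neg (by omega)]
  rw [e1, e2]
  show aa σ α (l+1+1) + bb σ α (l+3) - bb σ α (l+2)
    ≤ aa σ α (l+1) + bb σ α (l+2) - bb σ α (l+1)
  rw [aa, aa, bb, bb, bb]
  have hx : 0 < ((l:ℝ) + 1 + σ) - 1 := by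
    have hM : (0:ℝ) ≤ (l:ℝ) := Nat.cast_nonneg l
    linarith
  have h := core_M (p := 1 - α) (x := (l:ℝ) + 1 + σ) hx (by linarith) (by linarith)
  push_cast
  ring_nf at h ⊢
  linarith [h]

lemma glue_M2 {σ α : ℝ} (hσ0 : 0 < σ) (hα0 : 0 ≤ α) (hα1 : α ≤ 1)
    (n : ℕ) (hn : 3 ≤ n) :
    cc σ α n (n-1) ≤ cc σ α n (n-2) := by
  obtain ⟨M, rfl⟩ : ∃ M, n = M + 3 := ⟨n - 3, by omega⟩
  have e1 : cc σ α (M+3) (M+3-2) = aa σ α (M+1) + bb σ α (M+2) - bb σ α (M+1) := by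
    rw [cc, if_neg (by omega), if_neg (by omega), if_neg (by omega)]
    simp only [show M+3-2 = M+1 from by omega, show M+3-2+1 = M+2 from by omega]
  have e2 : cc σ α (M+3) (M+3-1) = aa σ α (M+2) - bb σ α (M+2) := by
    rw [cc, if_neg (by omega), if_neg (by omega), if_pos (by omega)]
    norm_num
  rw [e1, e2, aa, aa, bb, bb]
  have hx : 0 < ((M:ℝ) + 1 + σ) - 1 := by
    have hM : (0:ℝ) ≤ (M:ℝ) := Nat.cast_nonneg M
    linarith
  have h := core_M2 (p := 1 - α) (x := (M:ℝ) + 1 + σ) hx (by linarith) (by linarith)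
  push_cast
  ring_nf at h ⊢
  linarith [h]

lemma glue_keyB {σ α : ℝ} (hσ1 : 1/2 ≤ σ) (hσ2 : σ ≤ 1) (hα0 : 0 ≤ α) (hα1 : α ≤ 1)
    (n : ℕ) (hn : 2 ≤ n) :
    2*σ^(1-α)*(σ/(2-α) - 1/2) ≤ (2*σ-1) * cc σ α n 0 - σ^2 * cc σ α n 1 := by
  have hσ0 : (0:ℝ) < σ := by linarith
  have h := core_keyB (p := 1 - α) hσ1 hσ2 (by linarith) (by linarith)
  have hb2 : 0 ≤ bb σ α 2 := glue_b hσ0 hα0 hα1 2 (by omega)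
  have e0 : cc σ α n 0 = aa σ α 0 + bb σ α 1 := by
    rw [cc, if_neg (by omega), if_pos rfl]
  have hσp : σ ^ ((2:ℝ)-α) = σ ^ (1-α) * σ := by
    rw [show (2:ℝ)-α = (1-α)+1 from by ring, Real.rpow_add_one hσ0.ne']
  rcases eq_or_lt_of_le hn with h2 | h3
  · -- n = 2 : cc n 1 is the "last" coefficient aa 1 - bb 1
    have e1 : cc σ α n 1 = aa σ α 1 - bb σ α 1 := by
      rw [cc, if_neg (by omega), if_neg (by omega), if_pos (by omega)]
      norm_num [← h2]
    rw [e0, e1]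
    show _ ≤ (2*σ-1) * (aa σ α 0 + bb σ α 1) - σ^2 * (aa σ α (0+1) - bb σ α 1)
    rw [aa, aa, bb]
    rw [bb] at hb2
    push_cast at hb2 ⊢
    ring_nf at h hb2 ⊢
    rw [hσp] at h ⊢
    ring_nf at h ⊢
    nlinarith [h, hb2, sq_nonneg σ]
  · -- n ≥ 3 : cc n 1 is a middle coefficient
    have e1 : cc σ α n 1 = aa σ α 1 + bb σ α 2 - bb σ α 1 := by
      rw [cc, if_neg (by omega), if_neg (by omega), if_neg (by omega)]
    rw [e0, e1]
    show _ ≤ (2*σ-1) * (aa σ α 0 + bb σ α 1) - σ^2 * (aa σ α (0+1) + bb σ α 2 - bb σ α 1)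
    rw [aa, aa, bb, bb]
    push_cast
    ring_nf at h ⊢
    rw [hσp] at h ⊢
    ring_nf at h ⊢
    linarith [h]

end AuxiliaryLemmas

/-- Lemma 2.7: in any real inner product space,
`Σ_{k=0}^{n−1} ĉ_k^{(n)} ⟨v^{n−k} − v^{n−k−1}, σ v^n + (1−σ) v^{n−1}⟩
  ≥ (1/2) Σ_{k=0}^{n−1} ĉ_k^{(n)} (‖v^{n−k}‖² − ‖v^{n−k−1}‖²)`. -/
theorem inner_product_inequality
    (m : ℕ) (hm : 1 ≤ m) (lam alf : ℕ → ℝ)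
    (hlam : ∀ r ≤ m, 0 < lam r)
    (hmono : ∀ r, r < m → alf r < alf (r + 1))
    (h0 : 0 ≤ alf 0) (h1 : alf m ≤ 1)
    (hmid : ∃ r ≤ m, 0 < alf r ∧ alf r < 1)
    (τ : ℝ) (hτ : 0 < τ) (σ : ℝ) (hσ1 : 1 / 2 ≤ σ) (hσ2 : σ ≤ 1)
    (hFσ : Ffun m lam alf τ σ = 0)
    (V : Type*) [NormedAddCommGroup V] [InnerProductSpace ℝ V]
    (n : ℕ) (hn : 1 ≤ n) (v : ℕ → V) :
    ∑ k ∈ Finset.range n, chat m lam alf τ σ n k *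
        (inner ℝ (v (n - k) - v (n - k - 1)) (σ • v n + (1 - σ) • v (n - 1)) : ℝ) ≥
      1 / 2 * ∑ k ∈ Finset.range n, chat m lam alf τ σ n k *
        (‖v (n - k)‖ ^ 2 - ‖v (n - k - 1)‖ ^ 2) := by
  have hσ0 : (0:ℝ) < σ := by linarith
  -- bounds on alf
  have hstep : ∀ t j, j + t ≤ m → alf j ≤ alf (j + t) := by
    intro t
    induction t with
    | zero => intro j _; simp
    | succ t ih =>
      intro j h
      calc alf j ≤ alf (j + t) := ih j (by omega)
        _ ≤ alf (j + t + 1) := le_of_lt (hmono _ (by omega))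
        _ = alf (j + (t+1)) := by ring_nf
  have hbnd : ∀ r, r ≤ m → 0 ≤ alf r ∧ alf r ≤ 1 := by
    intro r hr
    constructor
    · calc (0:ℝ) ≤ alf 0 := h0
        _ ≤ alf (0 + r) := hstep r 0 (by omega)
        _ = alf r := by norm_num
    · calc alf r ≤ alf (r + (m - r)) := hstep (m-r) r (by omega)
        _ = alf m := by congr 1; omega
        _ ≤ 1 := h1
  -- positivity of weights
  have hμ : ∀ r, r ≤ m → 0 < lam r * (τ ^ (-alf r) / Real.Gamma (2 - alf r)) := by
    intro r hr
    have hΓ : 0 < Real.Gamma (2 - alf r) :=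
      Real.Gamma_pos_of_pos (by linarith [(hbnd r hr).2])
    have hτp : 0 < τ ^ (-alf r) := Real.rpow_pos_of_pos hτ _
    have := hlam r hr
    positivity
  rcases eq_or_lt_of_le hn with h1n | h2n
  · -- n = 1
    subst h1n
    simp only [Finset.sum_range_one, Nat.sub_zero, Nat.sub_self]
    have hγ : 0 ≤ chat m lam alf τ σ 1 0 := by
      apply Finset.sum_nonneg
      intro r hr
      simp only [Finset.mem_range] at hr
      have hc : cc σ (alf r) 1 0 = σ ^ (1 - alf r) := by
        rw [cc, if_pos rfl, aa]
      rw [hc]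
      exact mul_nonneg (hμ r (by omega)).le (Real.rpow_nonneg hσ0.le _)
    set a := v 1
    set b := v 0
    set d : V := a - b with hd
    have hns : ‖a‖^2 - ‖b‖^2 = 2 * (inner ℝ d a : ℝ) - ‖d‖^2 := norm_sq_diff a b
    have hw : σ • v 1 + (1 - σ) • v 0 - a = (σ - 1) • d := by
      simp only [hd]
      module
    have hinner : (inner ℝ d (σ • v 1 + (1 - σ) • v 0) : ℝ)
        = (σ - 1) * ‖d‖^2 + (inner ℝ d a : ℝ) := by
      have : (σ • v 1 + (1 - σ) • v 0) = (σ - 1) • d + a := by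
        rw [← hw]; abel
      rw [this, inner_add_right, real_inner_smul_right, real_inner_self_eq_norm_sq]
    rw [ge_iff_le, ← sub_nonneg]
    have key : chat m lam alf τ σ 1 0 *
          (inner ℝ (v 1 - v 0) (σ • v 1 + (1 - σ) • v 0) : ℝ)
        - 1/2 * (chat m lam alf τ σ 1 0 * (‖v 1‖^2 - ‖v 0‖^2))
        = chat m lam alf τ σ 1 0 * ((σ - 1/2) * ‖d‖^2) := by
      have hdv : v 1 - v 0 = d := rfl
      rw [hdv, hinner, hns]
      ring
    rw [key]
    have : (0:ℝ) ≤ (σ - 1/2) * ‖d‖^2 :=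
      mul_nonneg (by linarith) (by positivity)
    exact mul_nonneg hγ this
  · -- n ≥ 2
    have hn2 : 2 ≤ n := h2n
    have hmono' : ∀ k, 1 ≤ k → k ≤ n-2 →
        chat m lam alf τ σ n (k+1) ≤ chat m lam alf τ σ n k := by
      intro k hk1 hk2
      apply Finset.sum_le_sum
      intro r hr
      simp only [Finset.mem_range] at hr
      have hα := hbnd r (by omega)
      apply mul_le_mul_of_nonneg_left _ (hμ r (by omega)).le
      by_cases hc : k + 1 ≤ n - 2
      · exact glue_M hσ0 hα.1 hα.2 n k hk1 hc hn2
      · have hk3 : k = n - 2 := by omega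
        have hne : 3 ≤ n := by omega
        have e1 : k + 1 = n - 1 := by omega
        rw [e1, hk3]
        exact glue_M2 hσ0 hα.1 hα.2 n hne
    have hlast' : 0 ≤ chat m lam alf τ σ n (n-1) := by
      apply Finset.sum_nonneg
      intro r hr
      simp only [Finset.mem_range] at hr
      have hα := hbnd r (by omega)
      exact mul_nonneg (hμ r (by omega)).le (glue_last hσ0 hα.1 hα.2 n hn2)
    have hB' : σ^2 * chat m lam alf τ σ n 1 ≤ (2*σ-1) * chat m lam alf τ σ n 0 := by
      have hsum : ∑ r ∈ Finset.range (m+1),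
            (lam r * (τ ^ (-alf r) / Real.Gamma (2 - alf r)))
              * (2*σ^(1-alf r)*(σ/(2-alf r) - 1/2))
          ≤ ∑ r ∈ Finset.range (m+1),
            (lam r * (τ ^ (-alf r) / Real.Gamma (2 - alf r)))
              * ((2*σ-1) * cc σ (alf r) n 0 - σ^2 * cc σ (alf r) n 1) := by
        apply Finset.sum_le_sum
        intro r hr
        simp only [Finset.mem_range] at hr
        have hα := hbnd r (by omega)
        exact mul_le_mul_of_nonneg_left
          (glue_keyB hσ1 hσ2 hα.1 hα.2 n hn2) (hμ r (by omega)).le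
      have hFid : ∑ r ∈ Finset.range (m+1),
            (lam r * (τ ^ (-alf r) / Real.Gamma (2 - alf r)))
              * (2*σ^(1-alf r)*(σ/(2-alf r) - 1/2))
          = (2/τ^2) * Ffun m lam alf τ σ := by
        rw [Ffun, Finset.mul_sum]
        apply Finset.sum_congr rfl
        intro r hr
        simp only [Finset.mem_range] at hr
        have hα := hbnd r (by omega)
        have hΓ : 0 < Real.Gamma (2 - alf r) :=
          Real.Gamma_pos_of_pos (by linarith [hα.2])
        have hΓ3 : Real.Gamma (3 - alf r) = (2 - alf r) * Real.Gamma (2 - alf r) := by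
          rw [show (3:ℝ) - alf r = (2 - alf r) + 1 from by ring,
            Real.Gamma_add_one (by linarith [hα.2] : (2:ℝ) - alf r ≠ 0)]
        have hτa : τ ^ ((2:ℝ) - alf r) = τ * τ * τ ^ (-alf r) := by
          rw [show (2:ℝ) - alf r = 1 + (1 + (-alf r)) from by ring,
            Real.rpow_add hτ, Real.rpow_add hτ, Real.rpow_one]
          ring
        rw [hΓ3, hτa]
        have h2α : (2:ℝ) - alf r ≠ 0 := by linarith [hα.2]
        field_simp
      have hRHSeq : ∑ r ∈ Finset.range (m+1),
            (lam r * (τ ^ (-alf r) / Real.Gamma (2 - alf r)))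
              * ((2*σ-1) * cc σ (alf r) n 0 - σ^2 * cc σ (alf r) n 1)
          = (2*σ-1) * chat m lam alf τ σ n 0 - σ^2 * chat m lam alf τ σ n 1 := by
        rw [chat, chat, Finset.mul_sum, Finset.mul_sum, ← Finset.sum_sub_distrib]
        apply Finset.sum_congr rfl
        intro r _
        ring
      rw [hFid, hFσ, hRHSeq] at hsum
      simp only [mul_zero] at hsum
      linarith
    exact partI (fun k => chat m lam alf τ σ n k) σ hσ1 n hn2 hmono' hlast' hB' v
end
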